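/- arXiv:1807.11648 — 11 statements merged into one kernel-verified Lean document; each statement's English description precedes it below -/
import Mathlib

section
/- There exist universal constants C, C' > 0 such that for every integer d ≥ 2 and every finite set V ⊆ ℝ^d there exists a subset U ⊆ V with |U| ≤ C·d·log d such that U is a (C'·d·log² d)-spectral spanner of V. -/
/-!
STATEMENT 0: There exist universal constants C, C' > 0 such that for every integer
d ≥ 2 and every finite set V ⊆ ℝ^d there exists a subset U ⊆ V with
|U| ≤ C·d·log d such that U is a (C'·d·log² d)-spectral spanner of V.
-/

open Matrix Finset

noncomputable section

/-- The outer product `v vᵀ` as a `d × d` real matrix. -/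
def outer {d : ℕ} (v : Fin d → ℝ) : Matrix (Fin d) (Fin d) ℝ := Matrix.vecMulVec v v

/-- `U` is an `α`-spectral spanner of `V`: `U ⊆ V` and for every `v ∈ V` there is a
probability distribution `μ` on `U` with `v vᵀ ⪯ α · ∑_{u ∈ U} μ(u) u uᵀ` in the
Loewner order. -/
def IsSpectralSpanner {d : ℕ} (α : ℝ) (V U : Finset (Fin d → ℝ)) : Prop :=
  U ⊆ V ∧ ∀ v ∈ V, ∃ μ : (Fin d → ℝ) → ℝ,
    (∀ u, 0 ≤ μ u) ∧ (∑ u ∈ U, μ u) = 1 ∧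
    (α • (∑ u ∈ U, μ u • outer u) - outer v).PosSemidef

/-!
For `ε > 0` choose `U ⊆ V` with `|U| ≤ 2d` maximizing `det N`, `N = εI + ∑_{u ∈ U} u uᵀ`.
By the matrix determinant lemma, adding `v` multiplies `det N` by `1 + vᵀN⁻¹v`, and removing
`u ∈ U` multiplies it by `1 - uᵀN⁻¹u`. The leverages `uᵀN⁻¹u` sum to `tr (N⁻¹(N - εI)) < d`, so
when `|U| = 2d` some `u` has leverage `< 1/2`; maximality (adding `v`, or swapping `u` for `v`)
then bounds the leverage of every `v ∈ V` against a subset of `U` by `1`, and Cauchy–Schwarz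
gives `v vᵀ ⪯ εI + ∑_{u ∈ U} u uᵀ`. As there are finitely many candidates `U`, one of them works
for arbitrarily small `ε`, whence `v vᵀ ⪯ ∑_{u ∈ U} u uᵀ`. The uniform distribution on `U`
together with one more point of `V` is then a `(2d + 1)`-spectral spanner.
-/

namespace Matrix

variable {n : Type*} [Fintype n]

theorem dotProduct_vecMulVec_self_mulVec (u x : n → ℝ) :
    x ⬝ᵥ (vecMulVec u u *ᵥ x) = (u ⬝ᵥ x) ^ 2 := by
  rw [vecMulVec_mulVec, op_smul_eq_smul, dotProduct_smul, smul_eq_mul, dotProduct_comm x u, sq]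

theorem IsHermitian.dotProduct_mulVec_comm {N : Matrix n n ℝ} (hN : N.IsHermitian)
    (x y : n → ℝ) : x ⬝ᵥ (N *ᵥ y) = y ⬝ᵥ (N *ᵥ x) := by
  have hT : Nᵀ = N := by simpa [conjTranspose_eq_transpose_of_trivial] using hN.eq
  rw [dotProduct_mulVec, ← mulVec_transpose, hT, dotProduct_comm]

theorem PosSemidef.sq_dotProduct_mulVec_le {N : Matrix n n ℝ} (hN : N.PosSemidef)
    (x y : n → ℝ) : (y ⬝ᵥ (N *ᵥ x)) ^ 2 ≤ (y ⬝ᵥ (N *ᵥ y)) * (x ⬝ᵥ (N *ᵥ x)) := by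
  have hsymm := IsHermitian.dotProduct_mulVec_comm hN.1 x y
  have hquad : ∀ t : ℝ, 0 ≤ (x ⬝ᵥ (N *ᵥ x)) * (t * t) + 2 * (y ⬝ᵥ (N *ᵥ x)) * t
      + y ⬝ᵥ (N *ᵥ y) := fun t => by
    have := hN.dotProduct_mulVec_nonneg (y + t • x)
    simp only [star_trivial, mulVec_add, mulVec_smul, add_dotProduct, dotProduct_add,
      smul_dotProduct, dotProduct_smul, smul_eq_mul, hsymm] at this
    linarith
  have := discrim_le_zero hquad
  rw [discrim] at this
  linarith

variable [DecidableEq n]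

theorem PosDef.sq_dotProduct_le {N : Matrix n n ℝ} (hN : N.PosDef) (v x : n → ℝ) :
    (v ⬝ᵥ x) ^ 2 ≤ (v ⬝ᵥ (N⁻¹ *ᵥ v)) * (x ⬝ᵥ (N *ᵥ x)) := by
  have hv : N *ᵥ (N⁻¹ *ᵥ v) = v := by
    rw [mulVec_mulVec, mul_nonsing_inv _ hN.det_pos.ne'.isUnit, one_mulVec]
  have := PosSemidef.sq_dotProduct_mulVec_le hN.posSemidef x (N⁻¹ *ᵥ v)
  rwa [IsHermitian.dotProduct_mulVec_comm hN.1, hv, dotProduct_comm (N⁻¹ *ᵥ v) v,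
    dotProduct_comm x v] at this

theorem det_add_vecMulVec {R : Type*} [CommRing R] {A : Matrix n n R} (hA : IsUnit A.det)
    (u v : n → R) : (A + vecMulVec u v).det = A.det * (1 + v ⬝ᵥ (A⁻¹ *ᵥ u)) := by
  rw [vecMulVec_eq Unit, det_add_replicateCol_mul_replicateRow hA,
    det_unique (n := Unit)]
  simp only [PUnit.default_eq_unit, add_apply, one_apply_eq, Matrix.mul_apply, replicateRow_apply,
    replicateCol_apply, Finset.sum_mul, mul_assoc, dotProduct, mulVec, Finset.mul_sum]
  rw [Finset.sum_comm]

theorem PosDef.dotProduct_inv_mulVec_le_of_det_add_le {N : Matrix n n ℝ} (hN : N.PosDef)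
    {v : n → ℝ} {c : ℝ} (h : (N + vecMulVec v v).det ≤ c * N.det) :
    v ⬝ᵥ (N⁻¹ *ᵥ v) ≤ c - 1 := by
  rw [det_add_vecMulVec hN.det_pos.ne'.isUnit, mul_comm] at h
  linarith [le_of_mul_le_mul_right h hN.det_pos]

end Matrix

open Filter Topology in
theorem Finset.exists_mem_forall_pos_of_monotone {ι : Type*} {s : Finset ι}
    {P : ℝ → ι → Prop} (hP : ∀ i, Monotone fun ε => P ε i) (h : ∀ ε > 0, ∃ i ∈ s, P ε i) :
    ∃ i ∈ s, ∀ ε > 0, P ε i := by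
  by_contra! hfail
  have hsmall : ∀ᶠ ε in 𝓝[>] (0 : ℝ), ∀ i ∈ s, ¬P ε i := by
    refine (eventually_all_finset s).2 fun i hi => ?_
    obtain ⟨δ, hδ, hnot⟩ := hfail i hi
    filter_upwards [Ioo_mem_nhdsGT hδ] with ε hε hPε using hnot (hP i hε.2.le hPε)
  obtain ⟨ε, hε, hpos⟩ := (hsmall.and self_mem_nhdsWithin).exists
  obtain ⟨i, hi, hPi⟩ := h ε hpos
  exact hε i hi hPi

namespace SpectralSpanner

variable {n : Type*} [Fintype n] [DecidableEq n]

def regularizedFrame (ε : ℝ) (U : Finset (n → ℝ)) : Matrix n n ℝ :=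
  ε • 1 + ∑ u ∈ U, vecMulVec u u

variable {ε : ℝ} {U : Finset (n → ℝ)}

theorem dotProduct_regularizedFrame_mulVec (x : n → ℝ) :
    x ⬝ᵥ (regularizedFrame ε U *ᵥ x) = ε * (x ⬝ᵥ x) + ∑ u ∈ U, (u ⬝ᵥ x) ^ 2 := by
  simp only [regularizedFrame, add_mulVec, smul_mulVec, one_mulVec, dotProduct_add,
    dotProduct_smul, smul_eq_mul, sum_mulVec, dotProduct_sum, dotProduct_vecMulVec_self_mulVec]

theorem posDef_regularizedFrame (hε : 0 < ε) (U : Finset (n → ℝ)) :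
    (regularizedFrame ε U).PosDef :=
  (PosDef.one.smul hε).add_posSemidef
    (posSemidef_sum U fun u _ => by simpa using posSemidef_vecMulVec_self_star u)

theorem regularizedFrame_insert {v : n → ℝ} (hv : v ∉ U) :
    regularizedFrame ε (insert v U) = regularizedFrame ε U + vecMulVec v v := by
  rw [regularizedFrame, regularizedFrame, sum_insert hv]
  abel

/-- The sum is `tr (N⁻¹ (N - εI)) = card n - ε tr N⁻¹`. -/
theorem sum_dotProduct_inv_regularizedFrame_mulVec_lt [Nonempty n] (hε : 0 < ε)
    (U : Finset (n → ℝ)) :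
    ∑ u ∈ U, u ⬝ᵥ ((regularizedFrame ε U)⁻¹ *ᵥ u) < Fintype.card n := by
  set N := regularizedFrame ε U
  have hN := posDef_regularizedFrame hε U
  have hframe : ∑ u ∈ U, vecMulVec u u = N - ε • 1 := (add_sub_cancel_left _ _).symm
  have htrace : ∑ u ∈ U, u ⬝ᵥ (N⁻¹ *ᵥ u) = (N⁻¹ * ∑ u ∈ U, vecMulVec u u).trace := by
    simp only [Finset.mul_sum, trace_sum, mul_vecMulVec, trace_vecMulVec, dotProduct_comm]
  rw [htrace, hframe, Matrix.mul_sub, nonsing_inv_mul _ hN.det_pos.ne'.isUnit, mul_smul_comm,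
    mul_one, trace_sub, trace_one, trace_smul, smul_eq_mul]
  linarith [mul_pos hε hN.inv.trace_pos]

theorem exists_subset_dotProduct_inv_regularizedFrame_mulVec_le_one [Nonempty n] (hε : 0 < ε)
    {V : Finset (n → ℝ)} (hUV : U ⊆ V) (hU : #U ≤ 2 * Fintype.card n)
    (hmax : ∀ W ⊆ V, #W ≤ 2 * Fintype.card n →
      (regularizedFrame ε W).det ≤ (regularizedFrame ε U).det)
    {v : n → ℝ} (hv : v ∈ V) (hvU : v ∉ U) :
    ∃ U' ⊆ U, v ⬝ᵥ ((regularizedFrame ε U')⁻¹ *ᵥ v) ≤ 1 := by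
  set N := regularizedFrame ε U
  have hN := posDef_regularizedFrame hε U
  rcases hU.lt_or_eq with hlt | heq
  · refine ⟨U, subset_rfl, ?_⟩
    have hdet := hmax (insert v U) (insert_subset hv hUV) ((card_insert_le _ _).trans hlt)
    rw [regularizedFrame_insert hvU, ← one_mul N.det] at hdet
    linarith [hN.dotProduct_inv_mulVec_le_of_det_add_le hdet]
  · have hsum : ∑ u ∈ U, u ⬝ᵥ (N⁻¹ *ᵥ u) < ∑ _u ∈ U, (1 / 2 : ℝ) := by
      rw [sum_const, heq, nsmul_eq_mul]
      push_cast
      linarith [sum_dotProduct_inv_regularizedFrame_mulVec_lt hε U]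
    obtain ⟨u, huU, hu⟩ := exists_lt_of_sum_lt hsum
    set U' := U.erase u
    have hvU' : v ∉ U' := fun h => hvU (mem_of_mem_erase h)
    have hN' : regularizedFrame ε U' = N + vecMulVec u (-u) := by
      rw [vecMulVec_neg, ← sub_eq_add_neg, eq_sub_iff_add_eq, ← regularizedFrame_insert
        (notMem_erase u U), insert_erase huU]
    have hdetN' : (regularizedFrame ε U').det = N.det * (1 - u ⬝ᵥ (N⁻¹ *ᵥ u)) := by
      rw [hN', det_add_vecMulVec hN.det_pos.ne'.isUnit, neg_dotProduct, sub_eq_add_neg]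
    have hdet := hmax (insert v U') (insert_subset hv ((erase_subset u U).trans hUV))
      ((card_insert_le _ _).trans (card_erase_add_one huU ▸ hU))
    rw [regularizedFrame_insert hvU'] at hdet
    have hdet2 :
        (regularizedFrame ε U' + vecMulVec v v).det ≤ 2 * (regularizedFrame ε U').det := by
      rw [hdetN']
      nlinarith [hN.det_pos]
    exact ⟨U', erase_subset u U, by
      linarith [(posDef_regularizedFrame hε U').dotProduct_inv_mulVec_le_of_det_add_le hdet2]⟩

theorem exists_subset_card_le_forall_sq_dotProduct_le_add [Nonempty n] (V : Finset (n → ℝ))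
    (hε : 0 < ε) : ∃ U ⊆ V, #U ≤ 2 * Fintype.card n ∧
      ∀ v ∈ V, ∀ x, (v ⬝ᵥ x) ^ 2 ≤ ε * (x ⬝ᵥ x) + ∑ u ∈ U, (u ⬝ᵥ x) ^ 2 := by
  obtain ⟨U, hU, hmax⟩ := exists_max_image (V.powerset.filter (#· ≤ 2 * Fintype.card n))
    (fun W => (regularizedFrame ε W).det) ⟨∅, by simp⟩
  simp only [mem_filter, mem_powerset, and_imp] at hU hmax
  refine ⟨U, hU.1, hU.2, fun v hv x => ?_⟩
  by_cases hvU : v ∈ U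
  · have hxx : 0 ≤ x ⬝ᵥ x := by simpa using dotProduct_self_star_nonneg x
    have := single_le_sum (fun u _ => sq_nonneg (u ⬝ᵥ x)) hvU
    nlinarith [mul_nonneg hε.le hxx]
  obtain ⟨U', hU'U, hleverage⟩ :=
    exists_subset_dotProduct_inv_regularizedFrame_mulVec_le_one hε hU.1 hU.2 hmax hv hvU
  have hquad := dotProduct_regularizedFrame_mulVec (ε := ε) (U := U') x
  have hnonneg := (posDef_regularizedFrame hε U').posSemidef.dotProduct_mulVec_nonneg x
  have hmono : ∑ u ∈ U', (u ⬝ᵥ x) ^ 2 ≤ ∑ u ∈ U, (u ⬝ᵥ x) ^ 2 :=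
    sum_le_sum_of_subset_of_nonneg hU'U fun _ _ _ => sq_nonneg _
  simp only [star_trivial] at hnonneg
  nlinarith [(posDef_regularizedFrame hε U').sq_dotProduct_le v x]

theorem exists_subset_card_le_forall_sq_dotProduct_le [Nonempty n] (V : Finset (n → ℝ)) :
    ∃ U ⊆ V, #U ≤ 2 * Fintype.card n ∧
      ∀ v ∈ V, ∀ x, (v ⬝ᵥ x) ^ 2 ≤ ∑ u ∈ U, (u ⬝ᵥ x) ^ 2 := by
  have hxx (x : n → ℝ) : 0 ≤ x ⬝ᵥ x := by simpa using dotProduct_self_star_nonneg x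
  obtain ⟨U, hU, hUε⟩ := exists_mem_forall_pos_of_monotone
    (s := V.powerset.filter (#· ≤ 2 * Fintype.card n))
    (P := fun ε U => ∀ v ∈ V, ∀ x, (v ⬝ᵥ x) ^ 2 ≤ ε * (x ⬝ᵥ x) + ∑ u ∈ U, (u ⬝ᵥ x) ^ 2)
    (fun U ε ε' hεε' hU v hv x => (hU v hv x).trans (by gcongr; exact hxx x))
    (fun ε hε => by simpa [and_assoc] using exists_subset_card_le_forall_sq_dotProduct_le_add V hε)
  simp only [mem_filter, mem_powerset] at hU
  refine ⟨U, hU.1, hU.2, fun v hv x => le_of_forall_pos_le_add fun δ hδ => ?_⟩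
  have hsmall : δ / (x ⬝ᵥ x + 1) * (x ⬝ᵥ x) ≤ δ := by
    rw [div_mul_eq_mul_div, div_le_iff₀ (by linarith [hxx x])]
    nlinarith [hxx x]
  linarith [hUε (δ / (x ⬝ᵥ x + 1)) (div_pos hδ (by linarith [hxx x])) v hv x]

end SpectralSpanner

theorem half_le_log_of_two_le {d : ℕ} (hd : 2 ≤ d) : 1 / 2 ≤ Real.log d := by
  have : Real.log 2 ≤ Real.log d := Real.log_le_log (by norm_num) (by exact_mod_cast hd)
  linarith [Real.log_two_gt_d9]

/-- With the uniform distribution on `U`, the condition reads `v vᵀ ⪯ (α / #U) ∑_{u ∈ U} u uᵀ`. -/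
theorem IsSpectralSpanner.of_forall_sq_dotProduct_le {d : ℕ} {α : ℝ} {V U : Finset (Fin d → ℝ)}
    (hUV : U ⊆ V) (hU : U.Nonempty) (hα : (#U : ℝ) ≤ α)
    (h : ∀ v ∈ V, ∀ x, (v ⬝ᵥ x) ^ 2 ≤ ∑ u ∈ U, (u ⬝ᵥ x) ^ 2) :
    IsSpectralSpanner α V U := by
  have hcard : (0 : ℝ) < #U := by exact_mod_cast hU.card_pos
  have houter (u : Fin d → ℝ) : (outer u).PosSemidef := by
    simpa [outer] using posSemidef_vecMulVec_self_star u
  refine ⟨hUV, fun v hv => ⟨fun _ => (#U : ℝ)⁻¹, fun _ => by positivity, ?_, ?_⟩⟩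
  · rw [sum_const, nsmul_eq_mul, mul_inv_cancel₀ hcard.ne']
  refine .of_dotProduct_mulVec_nonneg (((posSemidef_sum U fun u _ =>
    (houter u).smul (inv_nonneg.2 hcard.le)).1.smul (.all α)).sub (houter v).1) fun x => ?_
  have hscale : 1 ≤ α * (#U : ℝ)⁻¹ := by rwa [← div_eq_mul_inv, one_le_div hcard]
  have hsum : 0 ≤ ∑ u ∈ U, (u ⬝ᵥ x) ^ 2 := sum_nonneg fun _ _ => sq_nonneg _
  simp only [outer, star_trivial, sub_mulVec, dotProduct_sub, smul_mulVec, dotProduct_smul,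
    smul_eq_mul, sum_mulVec, dotProduct_sum, dotProduct_vecMulVec_self_mulVec, ← mul_sum]
  nlinarith [h v hv x]

theorem spectral_spanner_exists :
    ∃ C > (0:ℝ), ∃ C' > (0:ℝ), ∀ d : ℕ, 2 ≤ d →
      ∀ V : Finset (Fin d → ℝ), ∃ U : Finset (Fin d → ℝ),
        (U.card : ℝ) ≤ C * d * Real.log d ∧
        IsSpectralSpanner (C' * d * (Real.log d) ^ 2) V U := by
  refine ⟨5, by norm_num, 10, by norm_num, fun d hd V => ?_⟩
  have : Nonempty (Fin d) := ⟨⟨0, by omega⟩⟩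
  rcases V.eq_empty_or_nonempty with rfl | ⟨v₀, hv₀⟩
  · exact ⟨∅, by simp; positivity, by simp [IsSpectralSpanner]⟩
  obtain ⟨U, hUV, hU, hspan⟩ := SpectralSpanner.exists_subset_card_le_forall_sq_dotProduct_le V
  have hcard : (#(insert v₀ U) : ℝ) ≤ 2 * d + 1 := by
    exact_mod_cast (card_insert_le _ _).trans (by simpa using hU)
  have hlog := half_le_log_of_two_le hd
  have hlog2 : 1 / 4 ≤ Real.log d ^ 2 := by nlinarith
  have hd' : (2 : ℝ) ≤ d := by exact_mod_cast hd
  refine ⟨insert v₀ U, by nlinarith, .of_forall_sq_dotProduct_le (insert_subset hv₀ hUV)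
    (insert_nonempty _ _) (by nlinarith) fun v hv x => (hspan v hv x).trans ?_⟩
  exact sum_le_sum_of_subset_of_nonneg (subset_insert _ _) fun _ _ _ => sq_nonneg _
end
end

section
/- Let d ≥ 1 be an integer, let 0 < ε < 1, and let V ⊆ {−1,1}^d be a finite set of ±1 vectors such that ⟨u,v⟩² ≤ d^{1+ε}/2 for all distinct u, v ∈ V. Then every d^{1−ε}-spectral spanner U of V satisfies U = V; that is, a d^{1−ε}-spectral spanner of V must contain every vector of V. -/
/-!
If `v ∉ U`, testing the Loewner inequality `v vᵀ ⪯ α ∑ μ(u) u uᵀ` against `v` gives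
`⟨v,v⟩² ≤ α ∑ μ(u) ⟨u,v⟩² ≤ α · max_{u ≠ v} ⟨u,v⟩²`. For ±1 vectors `⟨v,v⟩² = d²`, while with
`α = d^{1-ε}` and `⟨u,v⟩² ≤ d^{1+ε}/2` the right-hand side is at most `d²/2`.
-/

open Matrix Finset

noncomputable section

lemma dotProduct_outer_mulVec {d : ℕ} (u x : Fin d → ℝ) :
    x ⬝ᵥ (outer u *ᵥ x) = (u ⬝ᵥ x) ^ 2 := by
  rw [outer, vecMulVec_mulVec, op_smul_eq_smul, dotProduct_smul, smul_eq_mul, dotProduct_comm x u,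
    sq]

lemma sq_dotProduct_self_le_of_posSemidef {d : ℕ} {α : ℝ} {U : Finset (Fin d → ℝ)}
    {μ : (Fin d → ℝ) → ℝ} {v : Fin d → ℝ}
    (h : (α • (∑ u ∈ U, μ u • outer u) - outer v).PosSemidef) :
    (v ⬝ᵥ v) ^ 2 ≤ α * ∑ u ∈ U, μ u * (u ⬝ᵥ v) ^ 2 := by
  have hv := h.dotProduct_mulVec_nonneg v
  simp only [star_trivial, sub_mulVec, smul_mulVec, sum_mulVec, dotProduct_sub, dotProduct_smul,
    dotProduct_sum, dotProduct_outer_mulVec, smul_eq_mul] at hv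
  linarith

lemma dotProduct_self_of_forall_eq_one_or_neg_one {d : ℕ} {v : Fin d → ℝ}
    (hv : ∀ i, v i = 1 ∨ v i = -1) : v ⬝ᵥ v = d := by
  have hsq : ∀ i, v i * v i = 1 := fun i => by rcases hv i with h | h <;> simp [h]
  simp [dotProduct, hsq]

lemma IsSpectralSpanner.mem_of_sq_dotProduct_le {d : ℕ} {α c : ℝ} {V U : Finset (Fin d → ℝ)}
    (hU : IsSpectralSpanner α V U) {v : Fin d → ℝ} (hv : v ∈ V) (hα : 0 ≤ α)
    (hc : ∀ u ∈ V, u ≠ v → (u ⬝ᵥ v) ^ 2 ≤ c) (hlt : α * c < (v ⬝ᵥ v) ^ 2) : v ∈ U := by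
  by_contra hvU
  obtain ⟨μ, hμ0, hμ1, hpsd⟩ := hU.2 v hv
  have hbound : ∑ u ∈ U, μ u * (u ⬝ᵥ v) ^ 2 ≤ c :=
    calc ∑ u ∈ U, μ u * (u ⬝ᵥ v) ^ 2
        ≤ ∑ u ∈ U, μ u * c := sum_le_sum fun u hu =>
          mul_le_mul_of_nonneg_left (hc u (hU.1 hu) fun h => hvU (h ▸ hu)) (hμ0 u)
      _ = c := by rw [← sum_mul, hμ1, one_mul]
  have := sq_dotProduct_self_le_of_posSemidef hpsd
  nlinarith [mul_le_mul_of_nonneg_left hbound hα]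

theorem spanner_of_nearly_orthogonal_pm_one_vectors_is_everything_general
    (d : ℕ) (hd : 1 ≤ d) (ε : ℝ)
    (V : Finset (Fin d → ℝ))
    (hpm : ∀ v ∈ V, ∀ i, v i = 1 ∨ v i = -1)
    (hip : ∀ u ∈ V, ∀ v ∈ V, u ≠ v → (u ⬝ᵥ v) ^ 2 ≤ (d:ℝ) ^ ((1:ℝ) + ε) / 2)
    (U : Finset (Fin d → ℝ))
    (hU : IsSpectralSpanner ((d:ℝ) ^ ((1:ℝ) - ε)) V U) :
    U = V := by
  have hd0 : (0:ℝ) < d := by exact_mod_cast hd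
  refine hU.1.antisymm fun v hv =>
    hU.mem_of_sq_dotProduct_le hv (by positivity) (fun u hu huv => hip u hu v hv huv) ?_
  rw [dotProduct_self_of_forall_eq_one_or_neg_one (hpm v hv), ← mul_div_assoc,
    ← Real.rpow_add hd0, show (1 - ε + (1 + ε)) = (2:ℝ) by ring, Real.rpow_two]
  exact half_lt_self (by positivity)

theorem spanner_of_nearly_orthogonal_pm_one_vectors_is_everything
    (d : ℕ) (hd : 1 ≤ d) (ε : ℝ) (hε0 : 0 < ε) (hε1 : ε < 1)
    (V : Finset (Fin d → ℝ))
    (hpm : ∀ v ∈ V, ∀ i, v i = 1 ∨ v i = -1)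
    (hip : ∀ u ∈ V, ∀ v ∈ V, u ≠ v → (u ⬝ᵥ v) ^ 2 ≤ (d:ℝ) ^ ((1:ℝ) + ε) / 2)
    (U : Finset (Fin d → ℝ))
    (hU : IsSpectralSpanner ((d:ℝ) ^ ((1:ℝ) - ε)) V U) :
    U = V :=
  spanner_of_nearly_orthogonal_pm_one_vectors_is_everything_general d hd ε V hpm hip U hU
end
end

section
/- For every integer d ≥ 1 and every real 0 < ε < 1, there exists a set V ⊆ {−1,1}^d of ±1 vectors with |V| ≥ ⌊e^{d^ε/8}/2⌋ such that for all distinct u, v ∈ V one has |⟨u,v⟩| ≤ √(d^{1+ε}/2). -/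
/-!
Hoeffding on the discrete cube: for fixed `v`, averaging over sign vectors `σ` gives
`E exp (λ ⟪v, σ⟫) = ∏ᵢ cosh (λ vᵢ) ≤ exp (λ² ‖v‖² / 2)`, so at most `2 · 2ᵈ · exp (-t² / 2d)`
sign vectors `σ` satisfy `|⟪v, σ⟫| ≥ t` when `v` is itself a sign vector. A largest family of
sign vectors with pairwise `|⟪u, v⟫| < t` has these sets, centred at its members, covering the
whole cube (each member lies in its own, as `⟪v, v⟫ = d ≥ t`), so it has at least
`exp (t² / 2d) / 2` members. For `t = √(d^{1+ε}/2)` this is `exp (d^ε / 4) / 2`.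
-/

open Finset Matrix Real

theorem Finset.exists_pairwise_not_rel_card_le_sum_card_filter_rel {α : Type*} (S : Finset α)
    (r : α → α → Prop) [DecidableRel r] (hsymm : ∀ a b, r a b → r b a)
    (hrefl : ∀ a ∈ S, r a a) :
    ∃ T ⊆ S, (T : Set α).Pairwise (fun a b => ¬ r a b) ∧
      #S ≤ ∑ a ∈ T, #{b ∈ S | r a b} := by
  classical
  obtain ⟨T, hT, hmax⟩ := exists_max_image
    (S.powerset.filter fun T : Finset α => (T : Set α).Pairwise fun a b => ¬ r a b) card
    ⟨∅, by simp⟩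
  rw [mem_filter, mem_powerset] at hT
  refine ⟨T, hT.1, hT.2, ?_⟩
  have hcover : S ⊆ T.biUnion fun a => {b ∈ S | r a b} := by
    intro b hb
    simp only [mem_biUnion, mem_filter]
    by_cases hbT : b ∈ T
    · exact ⟨b, hbT, hb, hrefl b hb⟩
    by_contra! hfree
    have hins : (↑(insert b T) : Set α).Pairwise fun a c => ¬ r a c := by
      rw [coe_insert]
      exact hT.2.insert_of_notMem hbT fun a ha =>
        ⟨fun hba => hfree a ha hb (hsymm _ _ hba), fun hab => hfree a ha hb hab⟩
    have := hmax (insert b T) (mem_filter.2 ⟨mem_powerset.2 (insert_subset hb hT.1), hins⟩)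
    rw [card_insert_of_notMem hbT] at this
    omega
  exact (card_le_card hcover).trans card_biUnion_le

noncomputable def signVectors (ι : Type*) [Fintype ι] [DecidableEq ι] : Finset (ι → ℝ) :=
  Fintype.piFinset fun _ => {1, -1}

namespace signVectors

variable {ι : Type*} [Fintype ι] [DecidableEq ι]

theorem mem_iff {σ : ι → ℝ} : σ ∈ signVectors ι ↔ ∀ i, σ i = 1 ∨ σ i = -1 := by
  simp [signVectors]

theorem card_eq : #(signVectors ι) = 2 ^ Fintype.card ι := by
  simp [signVectors, Fintype.card_piFinset,
    card_insert_of_notMem (by norm_num : (1 : ℝ) ∉ ({-1} : Finset ℝ))]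

theorem dotProduct_self {σ : ι → ℝ} (hσ : σ ∈ signVectors ι) : σ ⬝ᵥ σ = Fintype.card ι := by
  have hsq : ∀ i, σ i * σ i = 1 := fun i => by rcases mem_iff.1 hσ i with h | h <;> simp [h]
  simp [dotProduct, hsq]

theorem sum_exp_mul_dotProduct (v : ι → ℝ) (l : ℝ) :
    ∑ σ ∈ signVectors ι, exp (l * (v ⬝ᵥ σ)) = ∏ i, 2 * cosh (l * v i) := by
  calc ∑ σ ∈ signVectors ι, exp (l * (v ⬝ᵥ σ))
      = ∑ σ ∈ signVectors ι, ∏ i, exp (l * (v i * σ i)) := by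
        simp only [dotProduct, mul_sum, exp_sum]
    _ = ∏ i, ∑ s ∈ {1, -1}, exp (l * (v i * s)) :=
        (prod_univ_sum (fun _ => {1, -1}) fun i s => exp (l * (v i * s))).symm
    _ = ∏ i, 2 * cosh (l * v i) := by
        congr! 1 with i
        rw [sum_pair (by norm_num), cosh_eq]
        ring_nf

theorem sum_exp_mul_dotProduct_le (v : ι → ℝ) (l : ℝ) :
    ∑ σ ∈ signVectors ι, exp (l * (v ⬝ᵥ σ)) ≤ 2 ^ Fintype.card ι * exp (l ^ 2 * (v ⬝ᵥ v) / 2) := by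
  calc ∑ σ ∈ signVectors ι, exp (l * (v ⬝ᵥ σ)) = ∏ i, 2 * cosh (l * v i) :=
        sum_exp_mul_dotProduct v l
    _ ≤ ∏ i, 2 * exp ((l * v i) ^ 2 / 2) :=
        prod_le_prod (fun i _ => by positivity) fun i _ => by gcongr; exact cosh_le_exp_half_sq _
    _ = 2 ^ Fintype.card ι * exp (l ^ 2 * (v ⬝ᵥ v) / 2) := by
        rw [prod_mul_distrib, prod_const, card_univ, ← exp_sum]
        simp only [dotProduct, mul_sum, sum_div]
        ring_nf

theorem card_filter_le_dotProduct_mul_exp_le (v : ι → ℝ) (t : ℝ) {l : ℝ} (hl : 0 ≤ l) :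
    #{σ ∈ signVectors ι | t ≤ v ⬝ᵥ σ} * exp (l * t)
      ≤ 2 ^ Fintype.card ι * exp (l ^ 2 * (v ⬝ᵥ v) / 2) := by
  calc #{σ ∈ signVectors ι | t ≤ v ⬝ᵥ σ} * exp (l * t)
      ≤ ∑ σ ∈ signVectors ι with t ≤ v ⬝ᵥ σ, exp (l * (v ⬝ᵥ σ)) := by
        rw [← nsmul_eq_mul]
        exact card_nsmul_le_sum _ _ _ fun σ hσ => by gcongr; exact (mem_filter.1 hσ).2
    _ ≤ ∑ σ ∈ signVectors ι, exp (l * (v ⬝ᵥ σ)) :=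
        sum_le_sum_of_subset_of_nonneg (filter_subset _ _) fun _ _ _ => (exp_pos _).le
    _ ≤ _ := sum_exp_mul_dotProduct_le v l

theorem card_filter_le_dotProduct_le (v : ι → ℝ) {t : ℝ} (ht : 0 ≤ t) :
    #{σ ∈ signVectors ι | t ≤ v ⬝ᵥ σ} ≤ 2 ^ Fintype.card ι * exp (-(t ^ 2 / (2 * (v ⬝ᵥ v)))) := by
  set q := v ⬝ᵥ v
  -- the optimal Chernoff parameter; when `q = 0` it is `0` and both exponents vanish
  have hexp : (t / q) ^ 2 * q / 2 - t / q * t = -(t ^ 2 / (2 * q)) := by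
    rcases eq_or_ne q 0 with hq | hq
    · simp [hq]
    · field_simp; ring
  have h := card_filter_le_dotProduct_mul_exp_le v t (div_nonneg ht (dotProduct_self_star_nonneg v))
  rw [← hexp, exp_sub, mul_div_assoc']
  exact (le_div_iff₀ (exp_pos _)).2 h

theorem card_filter_le_abs_dotProduct_le (v : ι → ℝ) {t : ℝ} (ht : 0 ≤ t) :
    #{σ ∈ signVectors ι | t ≤ |v ⬝ᵥ σ|}
      ≤ 2 * 2 ^ Fintype.card ι * exp (-(t ^ 2 / (2 * (v ⬝ᵥ v)))) := by
  have hsplit : {σ ∈ signVectors ι | t ≤ |v ⬝ᵥ σ|}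
      = {σ ∈ signVectors ι | t ≤ v ⬝ᵥ σ} ∪ {σ ∈ signVectors ι | t ≤ -v ⬝ᵥ σ} := by
    rw [← filter_or]
    simp only [le_abs, neg_dotProduct]
  have hneg := card_filter_le_dotProduct_le (-v) ht
  rw [neg_dotProduct_neg] at hneg
  calc (#{σ ∈ signVectors ι | t ≤ |v ⬝ᵥ σ|} : ℝ)
      ≤ #{σ ∈ signVectors ι | t ≤ v ⬝ᵥ σ} + #{σ ∈ signVectors ι | t ≤ -v ⬝ᵥ σ} := by
        rw [hsplit]; exact_mod_cast card_union_le _ _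
    _ ≤ _ := by linarith [card_filter_le_dotProduct_le v ht]

theorem exists_pairwise_abs_dotProduct_lt {t : ℝ} (ht : 0 ≤ t) (htn : t ≤ Fintype.card ι) :
    ∃ V ⊆ signVectors ι, (V : Set (ι → ℝ)).Pairwise (fun u v => |u ⬝ᵥ v| < t) ∧
      exp (t ^ 2 / (2 * Fintype.card ι)) ≤ 2 * #V := by
  set n := Fintype.card ι
  obtain ⟨V, hVS, hV, hcover⟩ := Finset.exists_pairwise_not_rel_card_le_sum_card_filter_rel
    (signVectors ι) (fun u v => t ≤ |u ⬝ᵥ v|) (fun u v h => by rwa [dotProduct_comm])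
    fun u hu => by simpa [dotProduct_self hu] using htn
  refine ⟨V, hVS, hV.mono' fun _ _ => not_le.1, ?_⟩
  have hnbhd : ∀ u ∈ V, (#{σ ∈ signVectors ι | t ≤ |u ⬝ᵥ σ|} : ℝ)
      ≤ 2 * 2 ^ n * exp (-(t ^ 2 / (2 * n))) := fun u hu => by
    simpa [dotProduct_self (hVS hu)] using card_filter_le_abs_dotProduct_le u ht
  have hcard : (2 : ℝ) ^ n ≤ #V * (2 * 2 ^ n * exp (-(t ^ 2 / (2 * n)))) := by
    calc (2 : ℝ) ^ n = #(signVectors ι) := by rw [card_eq, Nat.cast_pow, Nat.cast_ofNat]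
      _ ≤ ∑ u ∈ V, (#{σ ∈ signVectors ι | t ≤ |u ⬝ᵥ σ|} : ℝ) := by exact_mod_cast hcover
      _ ≤ _ := by rw [← nsmul_eq_mul]; exact sum_le_card_nsmul V _ _ hnbhd
  rw [← mul_le_mul_iff_right₀ (by positivity : (0 : ℝ) < 2 ^ n)]
  calc 2 ^ n * exp (t ^ 2 / (2 * n))
      ≤ #V * (2 * 2 ^ n * exp (-(t ^ 2 / (2 * n)))) * exp (t ^ 2 / (2 * n)) := by gcongr
    _ = 2 ^ n * (2 * #V) := by rw [Real.exp_neg]; field_simp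

end signVectors

theorem exists_large_nearly_orthogonal_pm_one_family_general
    (d : ℕ) (hd : 1 ≤ d) (ε : ℝ) (hε1 : ε < 1) :
    ∃ V : Finset (Fin d → ℝ),
      (∀ v ∈ V, ∀ i, v i = 1 ∨ v i = -1) ∧
      ⌊Real.exp ((d:ℝ) ^ ε / 8) / 2⌋₊ ≤ V.card ∧
      ∀ u ∈ V, ∀ v ∈ V, u ≠ v →
        |(u ⬝ᵥ v)| ≤ Real.sqrt ((d:ℝ) ^ ((1:ℝ) + ε) / 2) := by
  set t := √((d : ℝ) ^ ((1 : ℝ) + ε) / 2)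
  have hd1 : (1 : ℝ) ≤ d := by exact_mod_cast hd
  have hdε : 0 ≤ (d : ℝ) ^ ε := by positivity
  have htd : t ≤ Fintype.card (Fin d) := by
    rw [Fintype.card_fin, Real.sqrt_le_iff, ← Real.rpow_natCast, Nat.cast_two]
    refine ⟨by positivity, ?_⟩
    have := Real.rpow_le_rpow_of_exponent_le hd1 (by linarith : 1 + ε ≤ 2)
    linarith [Real.rpow_nonneg (Nat.cast_nonneg d) (1 + ε)]
  have hexp : t ^ 2 / (2 * Fintype.card (Fin d)) = (d : ℝ) ^ ε / 4 := by
    rw [Real.sq_sqrt (by positivity), Real.rpow_add (by positivity), Real.rpow_one,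
      Fintype.card_fin]
    field_simp
    ring
  obtain ⟨V, hVS, hV, hcard⟩ :=
    signVectors.exists_pairwise_abs_dotProduct_lt (Real.sqrt_nonneg _) htd
  refine ⟨V, fun v hv => signVectors.mem_iff.1 (hVS hv), Nat.floor_le_of_le ?_,
    fun u hu v hv huv => (hV hu hv huv).le⟩
  rw [hexp] at hcard
  linarith [exp_le_exp.2 (by linarith : (d : ℝ) ^ ε / 8 ≤ (d : ℝ) ^ ε / 4)]

theorem exists_large_nearly_orthogonal_pm_one_family
    (d : ℕ) (hd : 1 ≤ d) (ε : ℝ) (hε0 : 0 < ε) (hε1 : ε < 1) :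
    ∃ V : Finset (Fin d → ℝ),
      (∀ v ∈ V, ∀ i, v i = 1 ∨ v i = -1) ∧
      ⌊Real.exp ((d:ℝ) ^ ε / 8) / 2⌋₊ ≤ V.card ∧
      ∀ u ∈ V, ∀ v ∈ V, u ≠ v →
        |(u ⬝ᵥ v)| ≤ Real.sqrt ((d:ℝ) ^ ((1:ℝ) + ε) / 2) :=
  exists_large_nearly_orthogonal_pm_one_family_general d hd ε hε1
end

section
/- Let A, B ∈ ℝ^{d×d} be symmetric matrices and let 1 ≤ k ≤ d be an integer. Then A ⪯_k B if and only if Σ_{i=k}^{d} λ_i(B−A) ≥ 0, where λ_1(B−A) ≥ λ_2(B−A) ≥ … ≥ λ_d(B−A) are the eigenvalues of the symmetric matrix B−A listed in decreasing order. -/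
/-!
STATEMENT 4: Let A, B ∈ ℝ^{d×d} be symmetric and 1 ≤ k ≤ d. Then A ⪯_k B if and
only if Σ_{i=k}^{d} λ_i(B−A) ≥ 0, where λ_1 ≥ … ≥ λ_d are the eigenvalues of the
symmetric matrix B−A in decreasing order.
-/

open Matrix Finset

noncomputable section

/-- The Frobenius (trace) inner product of two real matrices. -/
def frob {d : ℕ} (A B : Matrix (Fin d) (Fin d) ℝ) : ℝ := ∑ i, ∑ j, A i j * B i j

/-- `A ⪯_k B` : `⟨A, Π⟩ ≤ ⟨B, Π⟩` for every orthogonal projection matrix `Π`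
(symmetric and idempotent) of rank `d - k + 1`. -/
def PrecK {d : ℕ} (k : ℕ) (A B : Matrix (Fin d) (Fin d) ℝ) : Prop :=
  ∀ P : Matrix (Fin d) (Fin d) ℝ, P.IsHermitian → P * P = P → P.rank = d - k + 1 →
    frob A P ≤ frob B P

/-! Diagonalise `B - A = U diag(λ) Uᵀ`. For an orthogonal projection `Π` of rank `r`,
`Q = Uᵀ Π U` is again one and `⟨B - A, Π⟩ = ∑ λ_i Q_ii`. The weights `Q_ii = ∑_j Q_ij²` lie in
`[0, 1]` and sum to `tr Π = r`, so the weighted sum is at least the sum of the `r` smallest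
eigenvalues; the projection onto the corresponding eigenvectors attains it. -/

theorem Finset.sum_le_sum_mul_of_forall_le_of_forall_le {ι : Type*} [Fintype ι]
    {f q : ι → ℝ} {s : Finset ι} {t : ℝ}
    (hs : ∀ i ∈ s, f i ≤ t) (hsc : ∀ i ∉ s, t ≤ f i)
    (hq₀ : ∀ i, 0 ≤ q i) (hq₁ : ∀ i, q i ≤ 1) (hq : ∑ i, q i = #s) :
    ∑ i ∈ s, f i ≤ ∑ i, f i * q i := by
  classical
  have hterm : ∀ i, 0 ≤ (f i - t) * (q i - if i ∈ s then 1 else 0) := by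
    intro i
    split_ifs with hi
    · exact mul_nonneg_of_nonpos_of_nonpos (by linarith [hs i hi]) (by linarith [hq₁ i])
    · exact mul_nonneg (by linarith [hsc i hi]) (by linarith [hq₀ i])
  have hexpand : ∑ i, (f i - t) * (q i - if i ∈ s then 1 else 0)
      = ∑ i, f i * q i - ∑ i ∈ s, f i := by
    simp only [sub_mul, mul_sub, sum_sub_distrib, ← mul_sum, mul_ite, mul_one, mul_zero,
      sum_ite_mem, univ_inter, hq, sum_const, nsmul_eq_mul]
    ring
  linarith [sum_nonneg fun i (_ : i ∈ univ) => hterm i]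

namespace Matrix

variable {n : Type*} [Fintype n]

theorem trace_eq_rank_of_isIdempotentElem [DecidableEq n] {K : Type*} [Field K]
    {P : Matrix n n K} (hP : IsIdempotentElem P) : P.trace = P.rank := by
  have hP' : IsIdempotentElem (toLin' P) := hP.map toLinAlgEquiv'
  rw [← trace_toLin'_eq, (LinearMap.IsIdempotentElem.isProj_range _ hP').trace, rank,
    toLin'_apply']

theorem apply_self_eq_sum_sq_of_isStarProjection {P : Matrix n n ℝ} (hP : IsStarProjection P)
    (i : n) : P i i = ∑ j, P i j ^ 2 := by
  conv_lhs => rw [← hP.isIdempotentElem.eq, mul_apply]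
  refine sum_congr rfl fun j _ => ?_
  rw [sq, ← hP.isSelfAdjoint.isHermitian.apply i j, star_trivial]

theorem apply_self_mem_Icc_of_isStarProjection {P : Matrix n n ℝ} (hP : IsStarProjection P)
    (i : n) : P i i ∈ Set.Icc 0 1 := by
  have hsq : P i i ^ 2 ≤ P i i := by
    conv_rhs => rw [apply_self_eq_sum_sq_of_isStarProjection hP i]
    exact single_le_sum (f := fun j => P i j ^ 2) (fun j _ => sq_nonneg _) (mem_univ i)
  have hnonneg : 0 ≤ P i i := by
    rw [apply_self_eq_sum_sq_of_isStarProjection hP i]; positivity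
  constructor <;> nlinarith

theorem isStarProjection_diagonal_indicator [DecidableEq n] (s : Finset n) :
    IsStarProjection (diagonal fun i => if i ∈ s then (1 : ℝ) else 0) := by
  refine ⟨?_, ?_⟩
  · simp [IsIdempotentElem, diagonal_mul_diagonal]
  · simp [IsSelfAdjoint, star_eq_conjTranspose]

namespace IsHermitian

open Unitary

variable [DecidableEq n] {C : Matrix n n ℝ} (hC : C.IsHermitian)

theorem trace_mul_eq_sum_eigenvalues_mul (P : Matrix n n ℝ) :
    (C * P).trace =
      ∑ i, hC.eigenvalues i * conjStarAlgAut ℝ _ (star hC.eigenvectorUnitary) P i i := by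
  rw [← trace_map' (conjStarAlgAut ℝ _ (star hC.eigenvectorUnitary)), map_mul,
    hC.conjStarAlgAut_star_eigenvectorUnitary]
  simp [trace, diagonal_mul]

theorem sum_eigenvalues_le_trace_mul {s : Finset n} {t : ℝ}
    (hs : ∀ i ∈ s, hC.eigenvalues i ≤ t) (hsc : ∀ i ∉ s, t ≤ hC.eigenvalues i)
    {P : Matrix n n ℝ} (hP : IsStarProjection P) (hrank : P.rank = #s) :
    ∑ i ∈ s, hC.eigenvalues i ≤ (C * P).trace := by
  set Q := conjStarAlgAut ℝ _ (star hC.eigenvectorUnitary) P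
  have hQ : IsStarProjection Q := hP.map _
  have hdiag : ∑ i, Q i i = #s := by
    rw [← hrank, ← trace_eq_rank_of_isIdempotentElem hP.isIdempotentElem,
      ← trace_map' (conjStarAlgAut ℝ _ (star hC.eigenvectorUnitary)) P]
    rfl
  have hq := apply_self_mem_Icc_of_isStarProjection hQ
  rw [hC.trace_mul_eq_sum_eigenvalues_mul]
  exact sum_le_sum_mul_of_forall_le_of_forall_le hs hsc (fun i => (hq i).1) (fun i => (hq i).2)
    hdiag

theorem exists_isStarProjection_trace_mul_eq (s : Finset n) :
    ∃ P : Matrix n n ℝ, IsStarProjection P ∧ P.rank = #s ∧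
      (C * P).trace = ∑ i ∈ s, hC.eigenvalues i := by
  set D : Matrix n n ℝ := diagonal fun i => if i ∈ s then 1 else 0
  set ψ := conjStarAlgAut ℝ _ (star hC.eigenvectorUnitary)
  have hD := isStarProjection_diagonal_indicator s
  refine ⟨ψ.symm D, hD.map _, ?_, ?_⟩
  · rw [← Nat.cast_inj (R := ℝ),
      ← trace_eq_rank_of_isIdempotentElem (hD.map ψ.symm).isIdempotentElem, trace_map']
    simp [trace]
  · rw [hC.trace_mul_eq_sum_eigenvalues_mul, StarAlgEquiv.apply_symm_apply]
    simp [D]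

end IsHermitian

end Matrix

theorem frob_eq_trace_mul_transpose {d : ℕ} (C P : Matrix (Fin d) (Fin d) ℝ) :
    frob C P = (C * Pᵀ).trace := by
  simp [frob, trace, mul_apply]

theorem frob_sub_left {d : ℕ} (A B P : Matrix (Fin d) (Fin d) ℝ) :
    frob (B - A) P = frob B P - frob A P := by
  simp [frob, sub_mul, sum_sub_distrib]

theorem precK_iff_forall_isStarProjection {d : ℕ} (k : ℕ) (A B : Matrix (Fin d) (Fin d) ℝ) :
    PrecK k A B ↔
      ∀ P : Matrix (Fin d) (Fin d) ℝ, IsStarProjection P → P.rank = d - k + 1 →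
        0 ≤ ((B - A) * P).trace := by
  have hfrob : ∀ P : Matrix (Fin d) (Fin d) ℝ, IsStarProjection P →
      ((B - A) * P).trace = frob B P - frob A P := fun P hP => by
    rw [← frob_sub_left, frob_eq_trace_mul_transpose, ← conjTranspose_eq_transpose_of_trivial,
      hP.isSelfAdjoint.isHermitian.eq]
  refine forall_congr' fun P => ⟨fun h hP hrank => ?_, fun h hH hP hrank => ?_⟩
  · rw [hfrob P hP, sub_nonneg]
    exact h hP.isSelfAdjoint.isHermitian hP.isIdempotentElem hrank
  · have hP' : IsStarProjection P := ⟨hP, hH.isSelfAdjoint⟩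
    linarith [h hP' hrank, hfrob P hP']

/-- `lam ⟨i, _⟩` is `λ_{i+1}`, so the paper's range `k ≤ i ≤ d` becomes `k - 1 ≤ i`. -/
theorem precK_iff_sum_smallest_eigenvalues_nonneg_general
    {d : ℕ} (k : ℕ) (hk1 : 1 ≤ k) (hkd : k ≤ d)
    (A B : Matrix (Fin d) (Fin d) ℝ)
    (hBA : (B - A).IsHermitian)
    (lam : Fin d → ℝ) (hanti : Antitone lam)
    (e : Equiv.Perm (Fin d)) (hlam : ∀ i, lam i = hBA.eigenvalues (e i)) :
    PrecK k A B ↔ 0 ≤ ∑ i ∈ Finset.univ.filter (fun i : Fin d => k - 1 ≤ (i:ℕ)), lam i := by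
  set m : Fin d := ⟨k - 1, by omega⟩
  have hS : univ.filter (fun i : Fin d => k - 1 ≤ (i : ℕ)) = Ici m := by
    ext i
    simp [m, Fin.le_def]
  set s := (Ici m).map e.toEmbedding
  have hcard : #s = d - k + 1 := by
    rw [card_map, Fin.card_Ici]
    simp only [m]
    omega
  have hsum : ∑ i ∈ s, hBA.eigenvalues i = ∑ i ∈ Ici m, lam i := by
    simp [s, sum_map, hlam]
  have hs : ∀ i ∈ s, hBA.eigenvalues i ≤ lam m := fun i hi => by
    rw [mem_map_equiv, mem_Ici] at hi
    simpa [hlam] using hanti hi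
  have hsc : ∀ i ∉ s, lam m ≤ hBA.eigenvalues i := fun i hi => by
    rw [mem_map_equiv, mem_Ici, not_le] at hi
    simpa [hlam] using hanti hi.le
  rw [precK_iff_forall_isStarProjection, hS, ← hsum, ← hcard]
  constructor
  · intro h
    obtain ⟨P, hP, hrank, htrace⟩ := hBA.exists_isStarProjection_trace_mul_eq s
    exact htrace ▸ h P hP hrank
  · intro h P hP hrank
    exact h.trans (hBA.sum_eigenvalues_le_trace_mul hs hsc hP hrank)

/-- `lam` lists the eigenvalues of `B - A` in decreasing order
(`lam ⟨0,_⟩` is λ_1, …, `lam ⟨d-1,_⟩` is λ_d); the sum `Σ_{i=k}^{d} λ_i`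
is over the (1-indexed) indices `i ∈ {k, …, d}`, i.e. 0-indexed positions
with `k - 1 ≤ position`. -/
theorem precK_iff_sum_smallest_eigenvalues_nonneg
    {d : ℕ} (k : ℕ) (hk1 : 1 ≤ k) (hkd : k ≤ d)
    (A B : Matrix (Fin d) (Fin d) ℝ)
    (hA : A.IsHermitian) (hB : B.IsHermitian)
    (hBA : (B - A).IsHermitian)
    (lam : Fin d → ℝ) (hanti : Antitone lam)
    (e : Equiv.Perm (Fin d)) (hlam : ∀ i, lam i = hBA.eigenvalues (e i)) :
    PrecK k A B ↔ 0 ≤ ∑ i ∈ Finset.univ.filter (fun i : Fin d => k - 1 ≤ (i:ℕ)), lam i :=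
  precK_iff_sum_smallest_eigenvalues_nonneg_general k hk1 hkd A B hBA lam hanti e hlam
end
end

section
/- Let s ≥ 2 be an integer and let L ∈ ℝ^{s×s} be a lower triangular matrix (L_{i,j} = 0 for j > i) with L_{i,i} = 1 for all 1 ≤ i ≤ s and |L_{i,j}| ≤ 1 for all 1 ≤ j ≤ i ≤ s. Then for every integer k with 2 ≤ k < s/2 one has σ_k(L) ≥ ((k−1)/s²)^{(k−1)/s}. -/
/-!
Since `L` is unitriangular, `det (Lᵀ L) = 1`, so `∏ σᵢ² = 1`, while `∑ σᵢ² = tr (Lᵀ L) ≤ s²` by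
the entry bound. Put `t = k - 1`, so that `σ_k` is `σ t` in the `0`-indexed family. By AM-GM the
`t` largest `σᵢ²` have product at most `(s² / t) ^ t`, hence the remaining `s - t`, each at most
`σ_t²`, have product at least `(t / s²) ^ t`. Thus `σ_t ≥ (t / s²) ^ (t / (2 (s - t)))`, which is
at least `(t / s²) ^ (t / s)` because `t / s² ≤ 1` and `2 (s - t) ≥ s`.
-/

open Matrix Finset

theorem Real.prod_le_arith_mean_pow {ι : Type*} (F : Finset ι) {x : ι → ℝ}
    (hx : ∀ i ∈ F, 0 ≤ x i) :
    ∏ i ∈ F, x i ≤ ((∑ i ∈ F, x i) / #F) ^ #F := by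
  rcases F.eq_empty_or_nonempty with rfl | hF
  · simp
  have hcard : #F ≠ 0 := hF.card_pos.ne'
  have hw : ∑ _i ∈ F, (#F : ℝ)⁻¹ = 1 := by simp [hcard]
  have hgm := Real.geom_mean_le_arith_mean_weighted F (fun _ => (#F : ℝ)⁻¹) x
    (fun _ _ => by positivity) hw hx
  rw [Real.finsetProd_rpow F x hx, ← Finset.mul_sum, inv_mul_eq_div] at hgm
  calc ∏ i ∈ F, x i = ((∏ i ∈ F, x i) ^ (#F : ℝ)⁻¹) ^ #F :=
        (Real.rpow_inv_natCast_pow (prod_nonneg hx) hcard).symm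
    _ ≤ _ := pow_le_pow_left₀ (Real.rpow_nonneg (prod_nonneg hx) _) hgm _

theorem Fin.div_pow_le_pow_of_prod_eq_one {s : ℕ} {x : Fin s → ℝ} (hx0 : ∀ i, 0 ≤ x i)
    (hx : Antitone x) (hprod : ∏ i, x i = 1) {S : ℝ} (hsum : ∑ i, x i ≤ S) (t : Fin s) :
    ((t : ℝ) / S) ^ (t : ℕ) ≤ x t ^ (s - t) := by
  set P := ∏ i ∈ Iio t, x i
  have hPQ : P * ∏ i ∈ Ici t, x i = 1 := by
    rw [← hprod, ← prod_mul_prod_compl (Iio t)]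
    congr 2
    ext i
    simp
  have hP : 0 < P := (prod_nonneg fun i _ => hx0 i).lt_of_ne (left_ne_zero_of_mul_eq_one hPQ).symm
  have hP_le : P ≤ (S / t) ^ (t : ℕ) := by
    calc P ≤ ((∑ i ∈ Iio t, x i) / #(Iio t)) ^ #(Iio t) :=
          Real.prod_le_arith_mean_pow _ fun i _ => hx0 i
      _ ≤ (S / t) ^ (t : ℕ) := by
        rw [Fin.card_Iio]
        gcongr
        · exact div_nonneg (sum_nonneg fun i _ => hx0 i) (Nat.cast_nonneg _)
        · exact (sum_le_univ_sum_of_nonneg hx0).trans hsum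
  have hQ_le : ∏ i ∈ Ici t, x i ≤ x t ^ (s - t) := by
    calc ∏ i ∈ Ici t, x i ≤ ∏ _i ∈ Ici t, x t :=
          prod_le_prod (fun i _ => hx0 i) fun i hi => hx (mem_Ici.mp hi)
      _ = x t ^ (s - t) := by rw [Finset.prod_const, Fin.card_Ici]
  calc ((t : ℝ) / S) ^ (t : ℕ) = ((S / t) ^ (t : ℕ))⁻¹ := by rw [← inv_pow, inv_div]
    _ ≤ P⁻¹ := inv_anti₀ hP hP_le
    _ = ∏ i ∈ Ici t, x i := (eq_inv_of_mul_eq_one_right hPQ).symm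
    _ ≤ x t ^ (s - t) := hQ_le

theorem Real.rpow_div_le_of_pow_le_pow {a c : ℝ} (ha0 : 0 < a) (ha1 : a ≤ 1) (hc : 0 ≤ c)
    {t s n : ℕ} (hs : 0 < s) (hsn : s ≤ n) (h : a ^ t ≤ c ^ n) : a ^ ((t : ℝ) / s) ≤ c := by
  have hn : n ≠ 0 := by omega
  calc a ^ ((t : ℝ) / s) ≤ a ^ ((t : ℝ) / n) := by
        apply Real.rpow_le_rpow_of_exponent_ge ha0 ha1
        gcongr
    _ = (a ^ t) ^ (n : ℝ)⁻¹ := by rw [div_eq_mul_inv, Real.rpow_mul ha0.le, Real.rpow_natCast]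
    _ ≤ (c ^ n) ^ (n : ℝ)⁻¹ := by gcongr
    _ = c := Real.pow_rpow_inv_natCast hc hn

theorem Fin.rpow_div_le_of_prod_sq_eq_one {s : ℕ} {σ : Fin s → ℝ} (hσ0 : ∀ i, 0 ≤ σ i)
    (hσ : Antitone σ) (hprod : ∏ i, σ i ^ 2 = 1) {S : ℝ} (hsum : ∑ i, σ i ^ 2 ≤ S) (t : Fin s)
    (ht : 0 < (t : ℕ)) (htS : t ≤ S) (hts : 2 * t ≤ s) :
    ((t : ℝ) / S) ^ ((t : ℝ) / s) ≤ σ t := by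
  have key := Fin.div_pow_le_pow_of_prod_eq_one (fun i => sq_nonneg (σ i))
    (fun i j hij => pow_le_pow_left₀ (hσ0 j) (hσ hij) 2) hprod hsum t
  rw [← pow_mul] at key
  have htR : (0 : ℝ) < t := by exact_mod_cast ht
  refine Real.rpow_div_le_of_pow_le_pow ?_ ?_ (hσ0 t) (by omega) (by omega) key
  · exact div_pos htR (htR.trans_le htS)
  · exact div_le_one_of_le₀ htS (htR.trans_le htS).le

theorem Matrix.trace_conjTranspose_mul_self_le {m n : Type*} [Fintype m] [Fintype n]
    (A : Matrix m n ℝ) (hA : ∀ i j, |A i j| ≤ 1) :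
    (Aᴴ * A).trace ≤ Fintype.card m * Fintype.card n := by
  calc (Aᴴ * A).trace = ∑ j, ∑ i, A i j ^ 2 := by
        simp [trace, mul_apply, sq]
    _ ≤ ∑ _j : n, ∑ _i : m, (1 : ℝ) := by
        gcongr with j _ i _
        exact (sq_le_one_iff_abs_le_one _).mpr (hA i j)
    _ = Fintype.card m * Fintype.card n := by simp [mul_comm]

theorem Matrix.IsHermitian.prod_eigenvalues_comp_eq_det {n : Type*} [Fintype n] [DecidableEq n]
    {A : Matrix n n ℝ} (hA : A.IsHermitian) (e : Equiv.Perm n) :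
    ∏ i, hA.eigenvalues (e i) = A.det := by
  simpa [Equiv.prod_comp] using hA.det_eq_prod_eigenvalues.symm

theorem Matrix.IsHermitian.sum_eigenvalues_comp_eq_trace {n : Type*} [Fintype n]
    [DecidableEq n] {A : Matrix n n ℝ} (hA : A.IsHermitian) (e : Equiv.Perm n) :
    ∑ i, hA.eigenvalues (e i) = A.trace := by
  simpa [Equiv.sum_comp] using hA.trace_eq_sum_eigenvalues.symm

theorem singular_value_lower_bound_of_lower_triangular
    (s : ℕ) (L : Matrix (Fin s) (Fin s) ℝ)
    (hlow : ∀ i j : Fin s, i < j → L i j = 0)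
    (hdiag : ∀ i, L i i = 1)
    (hbnd : ∀ i j : Fin s, j ≤ i → |L i j| ≤ 1)
    (σ : Fin s → ℝ) (hσ0 : ∀ i, 0 ≤ σ i) (hσanti : Antitone σ)
    (e : Equiv.Perm (Fin s))
    (hσ : ∀ i, (σ i) ^ 2 = (Matrix.isHermitian_conjTranspose_mul_self L).eigenvalues (e i))
    (k : ℕ) (hk2 : 2 ≤ k) (hks : 2 * k < s) :
    ((k - 1 : ℝ) / (s:ℝ) ^ 2) ^ (((k:ℝ) - 1) / (s:ℝ)) ≤ σ ⟨k - 1, by omega⟩ := by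
  have hA := isHermitian_conjTranspose_mul_self L
  have hdet : L.det = 1 := by
    simp [det_of_isLowerTriangular L fun i j h => hlow i j h, hdiag]
  have hprod : ∏ i, σ i ^ 2 = 1 := by
    simp_rw [hσ]
    rw [hA.prod_eigenvalues_comp_eq_det, det_mul, det_conjTranspose, hdet, star_one, one_mul]
  have hsum : ∑ i, σ i ^ 2 ≤ (s : ℝ) ^ 2 := by
    have hL : ∀ i j, |L i j| ≤ 1 := fun i j => (le_or_gt j i).elim (hbnd i j) fun h => by
      simp [hlow i j h]
    simp_rw [hσ]
    rw [hA.sum_eigenvalues_comp_eq_trace, sq]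
    simpa using L.trace_conjTranspose_mul_self_le hL
  have hk : ((k - 1 : ℕ) : ℝ) = k - 1 := Nat.cast_pred (by omega)
  rw [← hk]
  refine Fin.rpow_div_le_of_prod_sq_eq_one hσ0 hσanti hprod hsum ⟨k - 1, by omega⟩
    (by dsimp only; omega) ?_ (by dsimp only; omega)
  exact_mod_cast (show k - 1 ≤ s ^ 2 by have := Nat.le_self_pow two_ne_zero s; omega)
end

section
/- Let V ⊆ ℝ^d be a finite set, let U ⊆ V be nonempty, and let α > 0. Suppose that for every v ∈ V and every x ∈ ℝ^d one has ⟨v,x⟩² ≤ α · max_{u∈U} ⟨u,x⟩² (i.e., U is a weak α-spectral spanner of V). Then U is an α-spectral spanner of V: for every v ∈ V there exists a probability distribution μ_v on U (weights μ_v : U → [0,1] with Σ_{u∈U} μ_v(u) = 1) such that v vᵀ ⪯ α · Σ_{u∈U} μ_v(u) u uᵀ in the Loewner order. -/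
open Matrix Finset

noncomputable section

/-!
If no distribution works for `v`, the compact convex set `conv {α u uᵀ - v vᵀ | u ∈ U}` misses the
closed cone of matrices with nonnegative quadratic form, so Hahn–Banach (Farkas) yields a
functional `f`, nonnegative on that cone, with `α f (u uᵀ) < f (v vᵀ)` for all `u ∈ U`. The form
`S a b = f (a bᵀ + b aᵀ)` is symmetric and positive semidefinite; for the vector `x` representing
`S · v`, Cauchy–Schwarz gives `α ⟨u, x⟩² ≤ α S u u S v v < S v v ² = ⟨v, x⟩²` for every `u ∈ U`,
against the weak spanner inequality at `x`.
-/

theorem Finset.exists_weights_of_mem_convexHull_image {ι E : Type*} [AddCommGroup E]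
    [Module ℝ E] {s : Finset ι} {g : ι → E} {x : E} (hx : x ∈ convexHull ℝ (g '' s)) :
    ∃ w : ι → ℝ, (∀ i, 0 ≤ w i) ∧ ∑ i ∈ s, w i = 1 ∧ ∑ i ∈ s, w i • g i = x := by
  classical
  obtain ⟨κ, _, w, z, hw_nonneg, hw_sum, hz, rfl⟩ := mem_convexHull_iff_exists_fintype.1 hx
  choose c hc_mem hc_eq using hz
  refine ⟨fun i => ∑ k, if c k = i then w k else 0, fun i => sum_nonneg fun k _ => ?_, ?_, ?_⟩
  · split_ifs
    exacts [hw_nonneg k, le_rfl]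
  · rw [sum_comm, ← hw_sum]
    exact sum_congr rfl fun k _ => by rw [sum_ite_eq s, if_pos (mem_coe.1 (hc_mem k))]
  · simp_rw [sum_smul, ite_smul, zero_smul]
    rw [sum_comm]
    exact sum_congr rfl fun k _ => by rw [sum_ite_eq s, if_pos (mem_coe.1 (hc_mem k)), hc_eq]

instance Matrix.instLocallyConvexSpace {m n : Type*} [Fintype m] [Fintype n] :
    LocallyConvexSpace ℝ (Matrix m n ℝ) :=
  inferInstanceAs (LocallyConvexSpace ℝ (m → n → ℝ))

namespace Matrix

variable {n : Type*} [Fintype n]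

def quadFormCLM (x : n → ℝ) : Matrix n n ℝ →L[ℝ] ℝ where
  toFun A := x ⬝ᵥ A *ᵥ x
  map_add' A B := by simp [add_mulVec]
  map_smul' c A := by simp [smul_mulVec]
  cont := by fun_prop

def quadNonnegCone : ProperCone ℝ (Matrix n n ℝ) :=
  ⨅ x : n → ℝ, (ProperCone.positive ℝ ℝ).comap (quadFormCLM x)

theorem mem_quadNonnegCone {A : Matrix n n ℝ} :
    A ∈ quadNonnegCone ↔ ∀ x, 0 ≤ x ⬝ᵥ A *ᵥ x := by
  simp [quadNonnegCone, quadFormCLM]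

theorem posSemidef_iff_isHermitian_and_mem_quadNonnegCone {A : Matrix n n ℝ} :
    A.PosSemidef ↔ A.IsHermitian ∧ A ∈ quadNonnegCone := by
  simp [posSemidef_iff_dotProduct_mulVec, mem_quadNonnegCone]

theorem vecMulVec_self_mem_quadNonnegCone (a : n → ℝ) : vecMulVec a a ∈ quadNonnegCone :=
  (posSemidef_iff_isHermitian_and_mem_quadNonnegCone.1 (by
    simpa using posSemidef_vecMulVec_self_star a)).2

theorem exists_forall_mul_sq_dotProduct_lt {f : Matrix n n ℝ →L[ℝ] ℝ}
    (hf : ∀ A ∈ quadNonnegCone, 0 ≤ f A) {α : ℝ} (hα : 0 ≤ α) {U : Set (n → ℝ)}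
    {v : n → ℝ} (hU : ∀ u ∈ U, α * f (vecMulVec u u) < f (vecMulVec v v)) :
    ∃ x : n → ℝ, ∀ u ∈ U, α * (u ⬝ᵥ x) ^ 2 < (v ⬝ᵥ x) ^ 2 := by
  classical
  let B := (vecMulVecBilin ℝ ℝ).compr₂ f.toLinearMap
  let S := B + B.flip
  have hS_apply (a b : n → ℝ) : S a b = f (vecMulVec a b) + f (vecMulVec b a) := rfl
  have hS_symm : S.IsSymm := ⟨fun a b => by rw [RingHom.id_apply, hS_apply, hS_apply, add_comm]⟩
  have hS_nonneg (a : n → ℝ) : 0 ≤ S a a := by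
    rw [hS_apply]
    have := hf _ (vecMulVec_self_mem_quadNonnegCone a)
    positivity
  refine ⟨LinearMap.toMatrix₂' ℝ S *ᵥ v, fun u hu => ?_⟩
  have hdot (a : n → ℝ) : a ⬝ᵥ LinearMap.toMatrix₂' ℝ S *ᵥ v = S a v := by
    rw [← toLinearMap₂'_apply', toLinearMap₂'_toMatrix']
  rw [hdot, hdot]
  have hcs := LinearMap.BilinForm.apply_sq_le_of_symm S hS_nonneg hS_symm u v
  have huv : α * S u u < S v v := by
    rw [hS_apply, hS_apply]
    linarith [hU u hu]
  have hv : 0 < S v v := (mul_nonneg hα (hS_nonneg u)).trans_lt huv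
  calc α * S u v ^ 2 ≤ α * S u u * S v v := by
        rw [mul_assoc]
        exact mul_le_mul_of_nonneg_left hcs hα
    _ < S v v * S v v := mul_lt_mul_of_pos_right huv hv
    _ = S v v ^ 2 := (sq _).symm

end Matrix

theorem exists_posSemidef_of_mem_convexHull {d : ℕ} {U : Finset (Fin d → ℝ)} {α : ℝ}
    {v : Fin d → ℝ} {A : Matrix (Fin d) (Fin d) ℝ}
    (hA : A ∈ convexHull ℝ ((fun u => α • outer u - outer v) '' U))
    (hA_cone : A ∈ (quadNonnegCone : ProperCone ℝ (Matrix (Fin d) (Fin d) ℝ))) :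
    ∃ μ : (Fin d → ℝ) → ℝ, (∀ u, 0 ≤ μ u) ∧ (∑ u ∈ U, μ u) = 1 ∧
      (α • (∑ u ∈ U, μ u • outer u) - outer v).PosSemidef := by
  obtain ⟨μ, hμ_nonneg, hμ_sum, rfl⟩ := Finset.exists_weights_of_mem_convexHull_image hA
  refine ⟨μ, hμ_nonneg, hμ_sum, ?_⟩
  have hcomb : α • (∑ u ∈ U, μ u • outer u) - outer v
      = ∑ u ∈ U, μ u • (α • outer u - outer v) := by
    simp only [smul_sub, sum_sub_distrib, ← sum_smul, hμ_sum, one_smul, smul_sum, smul_comm α]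
  refine posSemidef_iff_isHermitian_and_mem_quadNonnegCone.2 ⟨?_, hcomb ▸ hA_cone⟩
  refine IsHermitian.ext fun i j => ?_
  simp [outer, Matrix.sum_apply, vecMulVec_apply, mul_comm]

theorem weak_spanner_is_strong_spanner_general
    {d : ℕ} (V U : Finset (Fin d → ℝ)) (hUne : U.Nonempty)
    (α : ℝ) (hα : 0 < α)
    (hweak : ∀ v ∈ V, ∀ x : Fin d → ℝ,
      (v ⬝ᵥ x) ^ 2 ≤ α * U.sup' hUne (fun u => (u ⬝ᵥ x) ^ 2)) :
    ∀ v ∈ V, ∃ μ : (Fin d → ℝ) → ℝ,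
      (∀ u, 0 ≤ μ u) ∧ (∑ u ∈ U, μ u) = 1 ∧
      (α • (∑ u ∈ U, μ u • outer u) - outer v).PosSemidef := by
  intro v hv
  by_contra! hno
  let g u := α • outer u - outer v
  have hdisj : Disjoint (convexHull ℝ (g '' U))
      (quadNonnegCone : ProperCone ℝ (Matrix (Fin d) (Fin d) ℝ)) :=
    Set.disjoint_left.2 fun A hA hA_cone => by
      obtain ⟨μ, hμ_nonneg, hμ_sum, hpsd⟩ := exists_posSemidef_of_mem_convexHull hA hA_cone
      exact hno μ hμ_nonneg hμ_sum hpsd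
  obtain ⟨f, hf_cone, hf_hull⟩ := quadNonnegCone.hyperplane_separation (convex_convexHull ℝ _)
    ((U.finite_toSet.image g).isCompact_convexHull ℝ) hdisj
  have hfU : ∀ u ∈ (U : Set (Fin d → ℝ)), α * f (vecMulVec u u) < f (vecMulVec v v) := by
    intro u hu
    have := hf_hull _ (subset_convexHull ℝ _ ⟨u, hu, rfl⟩)
    simp only [g, outer, map_sub, map_smul, smul_eq_mul] at this
    linarith
  obtain ⟨x, hx⟩ := exists_forall_mul_sq_dotProduct_lt hf_cone hα.le hfU
  obtain ⟨u, hu, hsup⟩ := U.exists_mem_eq_sup' hUne fun u => (u ⬝ᵥ x) ^ 2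
  have := hweak v hv x
  rw [hsup] at this
  exact (hx u hu).not_ge this

theorem weak_spanner_is_strong_spanner
    {d : ℕ} (V U : Finset (Fin d → ℝ)) (hUV : U ⊆ V) (hUne : U.Nonempty)
    (α : ℝ) (hα : 0 < α)
    (hweak : ∀ v ∈ V, ∀ x : Fin d → ℝ,
      (v ⬝ᵥ x) ^ 2 ≤ α * U.sup' hUne (fun u => (u ⬝ᵥ x) ^ 2)) :
    ∀ v ∈ V, ∃ μ : (Fin d → ℝ) → ℝ,
      (∀ u, 0 ≤ μ u) ∧ (∑ u ∈ U, μ u) = 1 ∧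
      (α • (∑ u ∈ U, μ u • outer u) - outer v).PosSemidef :=
  weak_spanner_is_strong_spanner_general V U hUne α hα hweak
end
end

section
/- Let V ⊆ ℝ^d be a finite nonempty set of vectors and let k, m be integers with 1 ≤ k < d and m > 2k. Then there exists a nonempty subset U ⊆ V with |U| ≤ m such that for every v ∈ V, writing w for the orthogonal projection of v onto the orthogonal complement of the linear span of U, one has w wᵀ ⪯_k 2·m^{2k/m} · (1/|U|)·Σ_{u∈U} u uᵀ. -/
/-!
STATEMENT 9: Let V ⊆ ℝ^d be finite nonempty, 1 ≤ k < d, m > 2k. Then there is a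
nonempty U ⊆ V with |U| ≤ m such that for every v ∈ V, writing w for the orthogonal
projection of v onto the orthogonal complement of the span of U (i.e. w is
orthogonal to span U and v − w ∈ span U), one has
w wᵀ ⪯_k 2·m^{2k/m} · (1/|U|)·Σ_{u∈U} u uᵀ.
-/

open Matrix Finset

noncomputable section

/-!
If `V` spans fewer than `m` dimensions, a linearly independent spanning subset of `V` (plus one
point) works, since then every residual `w` vanishes. Otherwise let `U` be the rows of an
`m`-tuple `F` from `V` maximising the Gram determinant `det (F Fᵀ)`, put `R = (F Fᵀ)⁻¹`,
`A = F Π Fᵀ` and `Q = 1 - Π`, so `tr Q ≤ k - 1`. Exchanging the `i`-th row of `F` for `v`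
cannot increase the Gram determinant, which says `‖w‖² R_ii ≤ 1`; summing, `‖w‖² tr R ≤ m`.
As `Fᵀ R F` is an orthogonal projection, `tr (A R) ≥ m - tr Q ≥ m - k + 1`, and Cauchy–Schwarz
gives `tr (A R)² ≤ tr A · tr R`. Hence `⟨w wᵀ, Π⟩ ≤ ‖w‖² ≤ m tr A / (m - k + 1)²`, and weighted
AM–GM gives `m / (m - k + 1)² ≤ 2 m^{2k/m} / m`.
-/

namespace Matrix

theorem trace_eq_rank_of_mul_self {ι K : Type*} [Fintype ι] [DecidableEq ι] [Field K]
    {P : Matrix ι ι K} (hP : P * P = P) : P.trace = P.rank := by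
  have hidem : IsIdempotentElem (toLin' P) := by
    have h := congrArg toLinAlgEquiv' hP
    rwa [map_mul] at h
  rw [← trace_toLin'_eq, (LinearMap.IsIdempotentElem.isProj_range _ hidem).trace]
  rfl

section Real

variable {ι κ : Type*} [Fintype ι] [Fintype κ]

theorem _root_.IsStarProjection.transpose_eq {P : Matrix ι ι ℝ} (hP : IsStarProjection P) :
    Pᵀ = P := by
  simpa [star_eq_conjTranspose, conjTranspose_eq_transpose_of_trivial] using
    hP.isSelfAdjoint.star_eq

theorem isStarProjection_of_transpose_eq {P : Matrix ι ι ℝ} (hPt : Pᵀ = P) (hPP : P * P = P) :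
    IsStarProjection P :=
  ⟨hPP, by rw [IsSelfAdjoint, star_eq_conjTranspose, conjTranspose_eq_transpose_of_trivial, hPt]⟩

theorem _root_.IsStarProjection.posSemidef {P : Matrix ι ι ℝ} (hP : IsStarProjection P) :
    P.PosSemidef := by
  have h := posSemidef_self_mul_conjTranspose P
  rwa [conjTranspose_eq_transpose_of_trivial, hP.transpose_eq, hP.isIdempotentElem.eq] at h

theorem dotProduct_mulVec_le_dotProduct_self [DecidableEq ι] {P : Matrix ι ι ℝ}
    (hP : IsStarProjection P) (w : ι → ℝ) : w ⬝ᵥ (P *ᵥ w) ≤ w ⬝ᵥ w := by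
  have := hP.one_sub.posSemidef.dotProduct_mulVec_nonneg w
  simp only [star_trivial, sub_mulVec, one_mulVec, dotProduct_sub] at this
  linarith

theorem trace_mul_transpose_self_nonneg (X : Matrix ι κ ℝ) : 0 ≤ trace (X * Xᵀ) := by
  simpa [conjTranspose_eq_transpose_of_trivial] using
    (posSemidef_self_mul_conjTranspose X).trace_nonneg

theorem sq_trace_mul_le (Y : Matrix ι κ ℝ) (Z : Matrix κ ι ℝ) :
    trace (Y * Z) ^ 2 ≤ trace (Y * Yᵀ) * trace (Zᵀ * Z) := by
  have := Finset.sum_mul_sq_le_sq_mul_sq Finset.univ (fun p : ι × κ => Y p.1 p.2)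
    (fun p => Z p.2 p.1)
  simpa [trace, mul_apply, Fintype.sum_prod_type, sq, Finset.sum_comm (γ := κ)] using this

theorem trace_mul_nonneg_of_isStarProjection {P Q : Matrix ι ι ℝ} (hP : IsStarProjection P)
    (hQ : IsStarProjection Q) : 0 ≤ trace (P * Q) := by
  have : trace (P * Q) = trace ((P * Q) * (P * Q)ᵀ) := by
    rw [transpose_mul, hP.transpose_eq, hQ.transpose_eq, Matrix.mul_assoc, ← Matrix.mul_assoc Q,
      hQ.isIdempotentElem.eq, trace_mul_comm P (Q * P), Matrix.mul_assoc, hP.isIdempotentElem.eq,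
      trace_mul_comm]
  exact this ▸ trace_mul_transpose_self_nonneg _

end Real

section Gram

variable {κ : Type*} [Fintype κ]

theorem of_mul_transpose_of_apply {ι : Type*} (h : ι → κ → ℝ) (a b : ι) :
    (of h * (of h)ᵀ) a b = h a ⬝ᵥ h b := by
  simp [mul_apply, dotProduct]

theorem submatrix_of_mul_transpose_of {ι ι' : Type*} (h : ι → κ → ℝ) (e : ι' → ι) :
    (of h * (of h)ᵀ).submatrix e e = of (h ∘ e) * (of (h ∘ e))ᵀ := by
  ext a b
  simp [of_mul_transpose_of_apply]

theorem trace_of_mul_mul_transpose_of {ι : Type*} [Fintype ι] (h : ι → κ → ℝ)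
    (P : Matrix κ κ ℝ) : trace (of h * P * (of h)ᵀ) = ∑ j, h j ⬝ᵥ (P *ᵥ h j) := by
  simp only [trace, diag, mul_apply, of_apply, transpose_apply, dotProduct, mulVec,
    Finset.sum_mul, Finset.mul_sum]
  exact Finset.sum_congr rfl fun j _ => by rw [Finset.sum_comm]; simp only [mul_comm, mul_left_comm]

end Gram

section InverseGram

variable {ι κ : Type*} [Fintype ι] [Fintype κ] [DecidableEq ι] {F : Matrix ι κ ℝ}

theorem transpose_inv_mul_transpose_self : ((F * Fᵀ)⁻¹)ᵀ = (F * Fᵀ)⁻¹ := by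
  rw [transpose_nonsing_inv, transpose_mul, transpose_transpose]

variable (hF : IsUnit (F * Fᵀ).det)
include hF

theorem isStarProjection_transpose_mul_inv_mul :
    IsStarProjection (Fᵀ * (F * Fᵀ)⁻¹ * F) := by
  refine isStarProjection_of_transpose_eq ?_ ?_
  · rw [transpose_mul, transpose_mul, transpose_transpose, transpose_inv_mul_transpose_self,
      Matrix.mul_assoc]
  · calc Fᵀ * (F * Fᵀ)⁻¹ * F * (Fᵀ * (F * Fᵀ)⁻¹ * F)
        = Fᵀ * ((F * Fᵀ)⁻¹ * (F * Fᵀ)) * (F * Fᵀ)⁻¹ * F := by simp only [Matrix.mul_assoc]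
      _ = Fᵀ * (F * Fᵀ)⁻¹ * F := by rw [nonsing_inv_mul _ hF, Matrix.mul_one]

variable [DecidableEq κ] {P : Matrix κ κ ℝ} (hP : IsStarProjection P)
include hP

theorem card_sub_trace_one_sub_le_trace :
    (Fintype.card ι : ℝ) - trace (1 - P) ≤ trace (F * P * Fᵀ * (F * Fᵀ)⁻¹) := by
  set M := Fᵀ * (F * Fᵀ)⁻¹ * F
  have hcyc : trace (F * P * Fᵀ * (F * Fᵀ)⁻¹) = trace (M * P) := by
    rw [trace_mul_cycle, trace_mul_comm, ← Matrix.mul_assoc, ← Matrix.mul_assoc]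
  have htrM : trace M = Fintype.card ι := by
    rw [trace_mul_cycle, mul_nonsing_inv _ hF, trace_one]
  have hsplit : trace (M * P) = trace M - (trace (1 - P) - trace ((1 - M) * (1 - P))) := by
    simp only [Matrix.sub_mul, Matrix.mul_sub, Matrix.one_mul, Matrix.mul_one, trace_sub]
    ring
  have := trace_mul_nonneg_of_isStarProjection
    (isStarProjection_transpose_mul_inv_mul hF).one_sub hP.one_sub
  rw [hcyc, hsplit, htrM]
  linarith

theorem sq_trace_le_trace_mul_trace_inv :
    trace (F * P * Fᵀ * (F * Fᵀ)⁻¹) ^ 2 ≤ trace (F * P * Fᵀ) * trace (F * Fᵀ)⁻¹ := by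
  set R := (F * Fᵀ)⁻¹
  have hR : Rᵀ = R := transpose_inv_mul_transpose_self
  have hPP := hP.isIdempotentElem.eq
  -- Cauchy–Schwarz for `F P` and `P Fᵀ R`, then `tr (R F P Fᵀ R) ≤ tr (R F Fᵀ R) = tr R`.
  have hcs := sq_trace_mul_le (F * P) (P * Fᵀ * R)
  have h1 : F * P * (P * Fᵀ * R) = F * P * Fᵀ * R := by
    simp only [← Matrix.mul_assoc, Matrix.mul_assoc F P P, hPP]
  have h2 : F * P * (F * P)ᵀ = F * P * Fᵀ := by
    rw [transpose_mul, hP.transpose_eq, ← Matrix.mul_assoc, Matrix.mul_assoc F P P, hPP]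
  have hZ : ∀ Q : Matrix κ κ ℝ, IsStarProjection Q →
      (Q * Fᵀ * R)ᵀ * (Q * Fᵀ * R) = R * F * Q * Fᵀ * R := by
    intro Q hQ
    rw [transpose_mul, transpose_mul, hR, hQ.transpose_eq, transpose_transpose]
    simp only [Matrix.mul_assoc]
    rw [← Matrix.mul_assoc Q Q, hQ.isIdempotentElem.eq]
  have h3 : trace ((P * Fᵀ * R)ᵀ * (P * Fᵀ * R)) ≤ trace R := by
    have hsum : R * F * P * Fᵀ * R + R * F * (1 - P) * Fᵀ * R = R := by
      rw [← Matrix.add_mul, ← Matrix.add_mul, ← Matrix.mul_add, add_sub_cancel, Matrix.mul_one,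
        Matrix.mul_assoc R, nonsing_inv_mul _ hF, Matrix.one_mul]
    have := trace_mul_transpose_self_nonneg ((1 - P) * Fᵀ * R)ᵀ
    rw [transpose_transpose, hZ _ hP.one_sub] at this
    have htr := congrArg trace hsum
    rw [trace_add] at htr
    rw [hZ _ hP]
    linarith
  rw [h1, h2] at hcs
  exact hcs.trans (mul_le_mul_of_nonneg_left h3 (h2 ▸ trace_mul_transpose_self_nonneg _))

end InverseGram

section Cofactor

variable {n : ℕ}

theorem det_eq_mul_det_submatrix_of_row_eq_single {R : Type*} [CommRing R]
    (A : Matrix (Fin (n + 1)) (Fin (n + 1)) R) (i : Fin (n + 1)) (c : R)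
    (hA : A i = Pi.single i c) :
    det A = c * det (A.submatrix i.succAbove i.succAbove) := by
  rw [det_succ_row A i, Fintype.sum_eq_single i fun j hj => by simp [hA, hj]]
  simp [hA, ← two_mul, pow_mul]

theorem adjugate_apply_self {R : Type*} [CommRing R]
    (A : Matrix (Fin (n + 1)) (Fin (n + 1)) R) (i : Fin (n + 1)) :
    adjugate A i i = det (A.submatrix i.succAbove i.succAbove) := by
  simp [adjugate_fin_succ_eq_det_submatrix, ← two_mul, pow_mul]

theorem inv_apply_self {K : Type*} [Field K]
    (A : Matrix (Fin (n + 1)) (Fin (n + 1)) K) (i : Fin (n + 1)) :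
    A⁻¹ i i = det (A.submatrix i.succAbove i.succAbove) / det A := by
  rw [inv_def, smul_apply, adjugate_apply_self, Ring.inverse_eq_inv, smul_eq_mul, div_eq_inv_mul]

/-- The unimodular row operation `E` turns the row `v` into its residual `w`, after which the
`i`-th row of the Gram matrix is `(w ⬝ᵥ w) • eᵢ`. -/
theorem det_of_mul_transpose_of_update {κ : Type*} [Fintype κ] [DecidableEq κ]
    (h : Fin (n + 1) → κ → ℝ) (i : Fin (n + 1)) {v w : κ → ℝ}
    (hvw : v - w ∈ Submodule.span ℝ (Set.range (h ∘ i.succAbove)))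
    (hw : ∀ j, w ⬝ᵥ h (i.succAbove j) = 0) :
    det (of (Function.update h i v) * (of (Function.update h i v))ᵀ) =
      (w ⬝ᵥ w) * det (of (h ∘ i.succAbove) * (of (h ∘ i.succAbove))ᵀ) := by
  obtain ⟨c, hc⟩ := (Submodule.mem_span_range_iff_exists_fun ℝ).mp hvw
  set g := Function.update h i w
  have hσ : g ∘ i.succAbove = h ∘ i.succAbove :=
    funext fun j => Function.update_of_ne (i.succAbove_ne j) _ _
  set r : Fin (n + 1) → ℝ := Fin.insertNth i 1 c
  set E : Matrix (Fin (n + 1)) (Fin (n + 1)) ℝ := (1 : Matrix _ _ ℝ).updateRow i r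
  have hE : of (Function.update h i v) = E * of g := by
    rw [updateRow_mul, Matrix.one_mul]
    ext a b
    rcases eq_or_ne a i with rfl | ha
    · have hb := congrFun hc b
      simp only [Finset.sum_apply, Pi.smul_apply, smul_eq_mul, Function.comp_apply,
        Pi.sub_apply] at hb
      simp [vecMul, dotProduct, Fin.sum_univ_succAbove _ a, r, g, hb]
    · simp [ha, g]
  have hdetE : det E = 1 := by
    have hsum : ∑ k, r k • (1 : Matrix (Fin (n + 1)) (Fin (n + 1)) ℝ) k = r := by
      ext j
      simp [one_apply]
    have := det_updateRow_sum (1 : Matrix (Fin (n + 1)) (Fin (n + 1)) ℝ) i r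
    rwa [hsum, det_one, smul_eq_mul, mul_one, show r i = 1 from Fin.insertNth_apply_same _ _ _]
      at this
  have hrow : (of g * (of g)ᵀ) i = Pi.single i (w ⬝ᵥ w) := by
    ext j
    rw [of_mul_transpose_of_apply]
    rcases eq_or_ne j i with rfl | hj
    · simp [g]
    · obtain ⟨j, rfl⟩ := Fin.exists_succAbove_eq hj
      simp [g, hw]
  rw [hE, transpose_mul, show E * of g * ((of g)ᵀ * Eᵀ) = E * (of g * (of g)ᵀ) * Eᵀ by
    simp only [Matrix.mul_assoc], det_mul, det_mul, det_transpose, hdetE, one_mul,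
    mul_one, det_eq_mul_det_submatrix_of_row_eq_single _ i _ hrow,
    submatrix_of_mul_transpose_of, hσ]

end Cofactor

end Matrix

open Matrix

section Residual

variable {κ : Type*} [Fintype κ]

theorem exists_sub_mem_and_dotProduct_eq_zero (K : Submodule ℝ (κ → ℝ)) (v : κ → ℝ) :
    ∃ w, v - w ∈ K ∧ ∀ u ∈ K, w ⬝ᵥ u = 0 := by
  let e := WithLp.linearEquiv 2 ℝ (κ → ℝ)
  obtain ⟨y, hy, z, hz, hv⟩ := (K.comap e.toLinearMap).exists_add_mem_mem_orthogonal (e.symm v)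
  refine ⟨e z, ?_, fun u hu => ?_⟩
  · have : v - e z = e y := by rw [← e.apply_symm_apply v, hv, map_add]; abel
    rw [this]
    exact hy
  · have := (K.comap e.toLinearMap).inner_right_of_mem_orthogonal (u := e.symm u)
      (by simpa using hu) hz
    rw [EuclideanSpace.inner_eq_star_dotProduct] at this
    simpa [e] using this

theorem dotProduct_self_le_of_sub_mem {K : Submodule ℝ (κ → ℝ)} {v w w' : κ → ℝ}
    (hvw : v - w ∈ K) (hw : ∀ u ∈ K, w ⬝ᵥ u = 0) (hvw' : v - w' ∈ K) :
    w ⬝ᵥ w ≤ w' ⬝ᵥ w' := by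
  set y := (v - w) - (v - w')
  have hy : w ⬝ᵥ y = 0 := hw y (K.sub_mem hvw hvw')
  have hw' : w' = w + y := by simp only [y]; abel
  rw [hw', add_dotProduct, dotProduct_add, dotProduct_add, hy, dotProduct_comm y w, hy]
  have : 0 ≤ y ⬝ᵥ y := Finset.sum_nonneg fun i _ => mul_self_nonneg (y i)
  linarith

end Residual

section VolumeMaximizer

variable {κ : Type*} [Fintype κ] [DecidableEq κ]
  {n : ℕ} {V : Set (κ → ℝ)} {h : Fin (n + 1) → κ → ℝ}
  (hhV : ∀ j, h j ∈ V)
  (hmax : ∀ h' : Fin (n + 1) → κ → ℝ, (∀ j, h' j ∈ V) →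
    det (of h' * (of h')ᵀ) ≤ det (of h * (of h)ᵀ))
  (hpos : 0 < det (of h * (of h)ᵀ))
  {v w : κ → ℝ} (hv : v ∈ V) (hvw : v - w ∈ Submodule.span ℝ (Set.range h))
  (hw : ∀ u ∈ Submodule.span ℝ (Set.range h), w ⬝ᵥ u = 0)
include hhV hmax hpos hv hvw hw

theorem dotProduct_self_mul_inv_apply_self_le_one (i : Fin (n + 1)) :
    (w ⬝ᵥ w) * (of h * (of h)ᵀ)⁻¹ i i ≤ 1 := by
  obtain ⟨w', hvw', hw'⟩ :=
    exists_sub_mem_and_dotProduct_eq_zero (Submodule.span ℝ (Set.range (h ∘ i.succAbove))) v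
  have hspan : Submodule.span ℝ (Set.range (h ∘ i.succAbove)) ≤ Submodule.span ℝ (Set.range h) :=
    Submodule.span_mono (Set.range_comp_subset_range _ _)
  have hle : w ⬝ᵥ w ≤ w' ⬝ᵥ w' := dotProduct_self_le_of_sub_mem hvw hw (hspan hvw')
  have hexchange := hmax (Function.update h i v) fun j => by
    rcases eq_or_ne j i with rfl | hj
    · simpa using hv
    · simpa [hj] using hhV j
  rw [det_of_mul_transpose_of_update h i hvw'
    fun j => hw' _ (Submodule.subset_span ⟨j, rfl⟩)] at hexchange
  have hminor : 0 ≤ det (of (h ∘ i.succAbove) * (of (h ∘ i.succAbove))ᵀ) := by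
    simpa [conjTranspose_eq_transpose_of_trivial] using
      (posSemidef_self_mul_conjTranspose (of (h ∘ i.succAbove))).det_nonneg
  rw [inv_apply_self, submatrix_of_mul_transpose_of, mul_div_assoc', div_le_one hpos]
  exact (mul_le_mul_of_nonneg_right hle hminor).trans hexchange

theorem dotProduct_self_mul_trace_inv_le :
    (w ⬝ᵥ w) * trace (of h * (of h)ᵀ)⁻¹ ≤ n + 1 := by
  rw [trace, Finset.mul_sum]
  calc ∑ i, (w ⬝ᵥ w) * (of h * (of h)ᵀ)⁻¹ i i ≤ ∑ _i : Fin (n + 1), (1 : ℝ) :=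
        Finset.sum_le_sum fun i _ =>
          dotProduct_self_mul_inv_apply_self_le_one hhV hmax hpos hv hvw hw i
    _ = n + 1 := by simp

theorem dotProduct_mulVec_mul_sq_le {P : Matrix κ κ ℝ} (hP : IsStarProjection P)
    (hQ : trace (1 - P) ≤ (n : ℝ) + 1) :
    w ⬝ᵥ (P *ᵥ w) * ((n : ℝ) + 1 - trace (1 - P)) ^ 2 ≤ (n + 1) * trace (of h * P * (of h)ᵀ) := by
  have hF : IsUnit (of h * (of h)ᵀ).det := hpos.ne'.isUnit
  have hτ := card_sub_trace_one_sub_le_trace hF hP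
  rw [Fintype.card_fin, Nat.cast_add, Nat.cast_one] at hτ
  have ht : 0 ≤ trace (of h * P * (of h)ᵀ) := by
    simpa [conjTranspose_eq_transpose_of_trivial] using
      (hP.posSemidef.mul_mul_conjTranspose_same (of h)).trace_nonneg
  have hquad := dotProduct_mulVec_le_dotProduct_self hP w
  have hww : 0 ≤ w ⬝ᵥ w := Finset.sum_nonneg fun i _ => mul_self_nonneg (w i)
  calc w ⬝ᵥ (P *ᵥ w) * ((n : ℝ) + 1 - trace (1 - P)) ^ 2
      ≤ (w ⬝ᵥ w) * trace (of h * P * (of h)ᵀ * (of h * (of h)ᵀ)⁻¹) ^ 2 :=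
        mul_le_mul hquad (pow_le_pow_left₀ (by linarith) hτ 2) (sq_nonneg _) hww
    _ ≤ (w ⬝ᵥ w) * (trace (of h * P * (of h)ᵀ) * trace (of h * (of h)ᵀ)⁻¹) :=
        mul_le_mul_of_nonneg_left (sq_trace_le_trace_mul_trace_inv hF hP) hww
    _ = trace (of h * P * (of h)ᵀ) * ((w ⬝ᵥ w) * trace (of h * (of h)ᵀ)⁻¹) := by ring
    _ ≤ trace (of h * P * (of h)ᵀ) * (n + 1) :=
        mul_le_mul_of_nonneg_left (dotProduct_self_mul_trace_inv_le hhV hmax hpos hv hvw hw) ht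
    _ = (n + 1) * trace (of h * P * (of h)ᵀ) := mul_comm _ _

end VolumeMaximizer

theorem Finset.exists_subset_card_lt_span_or_linearIndependent {K E : Type*} [DivisionRing K]
    [AddCommGroup E] [Module K E] (V : Finset E) (m : ℕ) :
    (∃ U ⊆ V, U.card < m ∧ ∀ v ∈ V, v ∈ Submodule.span K (U : Set E)) ∨
      ∃ f : Fin m → E, (∀ j, f j ∈ V) ∧ LinearIndependent K f := by
  classical
  obtain ⟨t, htV, hspan, hind⟩ := exists_linearIndependent K (V : Set E)
  have : Fintype t := (V.finite_toSet.subset htV).fintype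
  by_cases hcard : Fintype.card t < m
  · refine .inl ⟨t.toFinset, by simpa using htV, by rwa [Set.toFinset_card], fun v hv => ?_⟩
    rw [Set.coe_toFinset, hspan]
    exact Submodule.subset_span hv
  · obtain ⟨e⟩ := Function.Embedding.nonempty_of_card_le (α := Fin m) (β := t)
      (by simpa using hcard)
    exact .inr ⟨Subtype.val ∘ e, fun j => htV (e j).2, hind.comp e e.injective⟩

theorem sq_le_two_mul_rpow_mul_sq {k m : ℕ} (hm : 2 * k < m) :
    (m : ℝ) ^ 2 ≤ 2 * (m : ℝ) ^ (2 * (k : ℝ) / m) * ((m : ℝ) - k + 1) ^ 2 := by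
  have hmk : 2 * (k : ℝ) + 1 ≤ m := by exact_mod_cast hm
  have hm0 : (0 : ℝ) < m := by linarith [(k.cast_nonneg : (0 : ℝ) ≤ k)]
  set x := 2 * (k : ℝ) / m
  have hx0 : 0 ≤ x := by positivity
  have hx1 : x ≤ 1 := by rw [div_le_one hm0]; linarith
  have hamgm : (1 : ℝ) ^ (1 - x) * (1 / m) ^ x ≤ (1 - x) * 1 + x * (1 / m) :=
    Real.geom_mean_le_arith_mean2_weighted (by linarith) hx0 zero_le_one (by positivity)
      (by ring)
  rw [Real.one_rpow, one_mul] at hamgm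
  have hinv : (m : ℝ) ^ x * (1 / m) ^ x = 1 := by
    rw [← Real.mul_rpow hm0.le (by positivity), mul_one_div_cancel hm0.ne', Real.one_rpow]
  have hpoly : (m : ℝ) ^ 2 * ((1 - x) * 1 + x * (1 / m)) ≤ 2 * ((m : ℝ) - k + 1) ^ 2 := by
    have : (m : ℝ) ^ 2 * ((1 - x) * 1 + x * (1 / m)) = (m : ℝ) ^ 2 - 2 * k * m + 2 * k := by
      simp only [x]; field_simp
    rw [this]
    nlinarith
  calc (m : ℝ) ^ 2 = (m : ℝ) ^ x * ((m : ℝ) ^ 2 * (1 / m) ^ x) := by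
        rw [mul_left_comm, hinv, mul_one]
    _ ≤ (m : ℝ) ^ x * (2 * ((m : ℝ) - k + 1) ^ 2) :=
        mul_le_mul_of_nonneg_left
          ((mul_le_mul_of_nonneg_left hamgm (by positivity)).trans hpoly) (by positivity)
    _ = _ := by ring

theorem frob_outer {d : ℕ} (w : Fin d → ℝ) (P : Matrix (Fin d) (Fin d) ℝ) :
    frob (outer w) P = w ⬝ᵥ (P *ᵥ w) := by
  simp only [frob, outer, vecMulVec_apply, dotProduct, mulVec, Finset.mul_sum]
  exact Finset.sum_congr rfl fun i _ => Finset.sum_congr rfl fun j _ => by ring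

theorem frob_smul_sum {d : ℕ} {α : Type*} (c : ℝ) (s : Finset α)
    (f : α → Matrix (Fin d) (Fin d) ℝ) (P : Matrix (Fin d) (Fin d) ℝ) :
    frob (c • ∑ a ∈ s, f a) P = c * ∑ a ∈ s, frob (f a) P := by
  simp only [frob, Matrix.smul_apply, Matrix.sum_apply, smul_eq_mul, Finset.mul_sum,
    Finset.sum_mul, mul_assoc]
  symm
  rw [Finset.sum_comm]
  exact Finset.sum_congr rfl fun i _ => Finset.sum_comm

theorem trace_one_sub_le {d k : ℕ} {P : Matrix (Fin d) (Fin d) ℝ} (hPP : P * P = P)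
    (hrank : P.rank = d - k + 1) : trace (1 - P) ≤ (k : ℝ) - 1 := by
  rw [trace_sub, trace_one, trace_eq_rank_of_mul_self hPP, hrank, Fintype.card_fin]
  have : (d : ℝ) ≤ ((d - k : ℕ) : ℝ) + k := by exact_mod_cast le_tsub_add
  push_cast
  linarith

theorem precK_outer_zero {d k : ℕ} {c : ℝ} (hc : 0 ≤ c) (U : Finset (Fin d → ℝ)) :
    PrecK k (outer 0) (c • ∑ u ∈ U, outer u) := by
  intro P hPh hPP _
  have hP : IsStarProjection P := ⟨hPP, hPh⟩
  rw [frob_outer, frob_smul_sum, zero_dotProduct]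
  exact mul_nonneg hc <| Finset.sum_nonneg fun u _ => by
    simpa [frob_outer] using hP.posSemidef.dotProduct_mulVec_nonneg u

theorem precK_outer_of_gram_det_max {d n k : ℕ} {V : Set (Fin d → ℝ)}
    {h : Fin (n + 1) → Fin d → ℝ} (hhV : ∀ j, h j ∈ V)
    (hmax : ∀ h' : Fin (n + 1) → Fin d → ℝ, (∀ j, h' j ∈ V) →
      det (of h' * (of h')ᵀ) ≤ det (of h * (of h)ᵀ))
    (hpos : 0 < det (of h * (of h)ᵀ)) (hk : 2 * k < n + 1)
    {v w : Fin d → ℝ} (hv : v ∈ V) (hvw : v - w ∈ Submodule.span ℝ (Set.range h))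
    (hw : ∀ u ∈ Submodule.span ℝ (Set.range h), w ⬝ᵥ u = 0) :
    PrecK k (outer w) ((2 * ((n + 1 : ℕ) : ℝ) ^ (2 * (k : ℝ) / ((n + 1 : ℕ) : ℝ)) *
      ((n + 1 : ℕ) : ℝ)⁻¹) • ∑ j, outer (h j)) := by
  intro P hPh hPP hrank
  have hP : IsStarProjection P := ⟨hPP, hPh⟩
  have harith := sq_le_two_mul_rpow_mul_sq hk
  rw [frob_outer, frob_smul_sum]
  simp only [frob_outer]
  rw [← trace_of_mul_mul_transpose_of]
  push_cast at harith ⊢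
  set N : ℝ := (n : ℝ) + 1
  set t := trace (of h * P * (of h)ᵀ)
  set c := 2 * N ^ (2 * (k : ℝ) / N)
  have hQ := trace_one_sub_le hPP hrank
  have hkN : 2 * (k : ℝ) + 1 ≤ N := by
    have : 2 * k + 1 ≤ n + 1 := hk
    simp only [N]; exact_mod_cast this
  have hk0 : (0 : ℝ) ≤ k := k.cast_nonneg
  have hquad0 : 0 ≤ w ⬝ᵥ (P *ᵥ w) := by simpa using hP.posSemidef.dotProduct_mulVec_nonneg w
  have key := dotProduct_mulVec_mul_sq_le hhV hmax hpos hv hvw hw hP (by linarith)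
  have hsq : (N - k + 1) ^ 2 ≤ (N - trace (1 - P)) ^ 2 :=
    pow_le_pow_left₀ (by linarith) (by linarith) 2
  rw [show c * N⁻¹ * t = c * (N * t) / N ^ 2 by field_simp, le_div_iff₀ (by positivity)]
  calc w ⬝ᵥ (P *ᵥ w) * N ^ 2 ≤ w ⬝ᵥ (P *ᵥ w) * (c * (N - k + 1) ^ 2) :=
        mul_le_mul_of_nonneg_left harith hquad0
    _ ≤ c * (w ⬝ᵥ (P *ᵥ w) * (N - trace (1 - P)) ^ 2) := by
        rw [mul_left_comm]
        exact mul_le_mul_of_nonneg_left (mul_le_mul_of_nonneg_left hsq hquad0) (by positivity)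
    _ ≤ c * (N * t) := mul_le_mul_of_nonneg_left key (by positivity)

theorem greedy_volume_maximization_orthogonal_part_general
    {d : ℕ} (V : Finset (Fin d → ℝ)) (hV : V.Nonempty)
    (k m : ℕ) (hm : 2 * k < m) :
    ∃ U : Finset (Fin d → ℝ), U ⊆ V ∧ U.Nonempty ∧ U.card ≤ m ∧
      ∀ v ∈ V, ∀ w : Fin d → ℝ,
        v - w ∈ Submodule.span ℝ (U : Set (Fin d → ℝ)) →
        (∀ u ∈ Submodule.span ℝ (U : Set (Fin d → ℝ)), w ⬝ᵥ u = 0) →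
        PrecK k (outer w)
          ((2 * (m:ℝ) ^ ((2 * (k:ℝ)) / (m:ℝ)) * ((U.card : ℝ))⁻¹) • ∑ u ∈ U, outer u) := by
  classical
  obtain ⟨v₀, hv₀⟩ := hV
  rcases V.exists_subset_card_lt_span_or_linearIndependent (K := ℝ) m with
    ⟨U, hUV, hUm, hspan⟩ | ⟨f, hfV, hf⟩
  · refine ⟨insert v₀ U, Finset.insert_subset hv₀ hUV, Finset.insert_nonempty _ _,
      (Finset.card_insert_le _ _).trans hUm, fun v hv w hvw hw => ?_⟩
    have hv' : v ∈ Submodule.span ℝ ((insert v₀ U : Finset (Fin d → ℝ)) : Set (Fin d → ℝ)) :=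
      Submodule.span_mono (Finset.coe_subset.mpr (Finset.subset_insert _ _)) (hspan v hv)
    obtain rfl : w = 0 :=
      dotProduct_self_eq_zero.mp (hw w (by simpa using Submodule.sub_mem _ hv' hvw))
    exact precK_outer_zero (by positivity) _
  · obtain ⟨n, rfl⟩ : ∃ n, m = n + 1 := ⟨m - 1, by omega⟩
    obtain ⟨h, hhV, hmax⟩ := Finset.exists_max_image (Fintype.piFinset fun _ => V)
      (fun h : Fin (n + 1) → Fin d → ℝ => det (of h * (of h)ᵀ)) ⟨f, by simpa using hfV⟩
    simp only [Fintype.mem_piFinset] at hhV hmax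
    have hpos : 0 < det (of h * (of h)ᵀ) := by
      refine lt_of_lt_of_le ?_ (hmax f hfV)
      simpa [conjTranspose_eq_transpose_of_trivial] using
        (PosDef.mul_conjTranspose_self (of f) (vecMul_injective_iff.mpr hf)).det_pos
    have hinj : Function.Injective h := fun a b hab => by_contra fun hne =>
      hpos.ne' (det_zero_of_row_eq hne (funext fun c => by simp [of_mul_transpose_of_apply, hab]))
    refine ⟨Finset.univ.image h, fun u hu => ?_, Finset.univ_nonempty.image _,
      Finset.card_image_le.trans (by simp), ?_⟩
    · obtain ⟨j, -, rfl⟩ := Finset.mem_image.mp hu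
      exact hhV j
    rw [Finset.card_image_of_injective _ hinj, Finset.sum_image fun a _ b _ hab => hinj hab,
      Finset.coe_image, Finset.coe_univ, Set.image_univ, Finset.card_univ, Fintype.card_fin]
    exact fun v hv w hvw hw => precK_outer_of_gram_det_max hhV hmax hpos hm hv hvw hw

theorem greedy_volume_maximization_orthogonal_part
    {d : ℕ} (V : Finset (Fin d → ℝ)) (hV : V.Nonempty)
    (k m : ℕ) (hk1 : 1 ≤ k) (hkd : k < d) (hm : 2 * k < m) :
    ∃ U : Finset (Fin d → ℝ), U ⊆ V ∧ U.Nonempty ∧ U.card ≤ m ∧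
      ∀ v ∈ V, ∀ w : Fin d → ℝ,
        v - w ∈ Submodule.span ℝ (U : Set (Fin d → ℝ)) →
        (∀ u ∈ Submodule.span ℝ (U : Set (Fin d → ℝ)), w ⬝ᵥ u = 0) →
        PrecK k (outer w)
          ((2 * (m:ℝ) ^ ((2 * (k:ℝ)) / (m:ℝ)) * ((U.card : ℝ))⁻¹) • ∑ u ∈ U, outer u) :=
  greedy_volume_maximization_orthogonal_part_general V hV k m hm
end
end

section
/- Let M ∈ ℝ^{m×m} be an upper triangular matrix (M_{ℓ,j} = 0 for ℓ > j) satisfying Σ_{ℓ=i}^{j} M_{ℓ,j}² ≤ M_{i,i}² for all 1 ≤ i ≤ j ≤ m. Then for every integer k with 1 ≤ k < m/2, one has M_{m,m}² ≤ 2·m^{2k/m} · (1/m)·Σ_{i=k}^{m} σ_i(M)². -/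
/-!
By the min-max principle, `σ_i(M)²` is at most the squared Frobenius norm of the rows `i, …, m`
of `M`, and the column condition bounds the latter by `m · M_{ii}²`. The same condition makes the
squared diagonal entries decrease, so each is at least `t = M_{mm}²`. Comparing the two
factorisations `∏ σ_i² = det (Mᵀ M) = ∏ M_{ii}²` and bounding the first `k - 1` singular values
as above gives `t ^ (m - k + 1) ≤ m ^ (k - 1) · ∏_{i ≥ k} σ_i²`; AM-GM on the remaining product
and `m - k + 1 > m / 2` finish the estimate.
-/

open Matrix Finset

theorem exists_ne_zero_forall_eq_zero_of_card_lt {K V ι : Type*} [Field K] [AddCommGroup V]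
    [Module K V] [FiniteDimensional K V] [Fintype ι] (f : ι → V →ₗ[K] K)
    (h : Fintype.card ι < Module.finrank K V) : ∃ x ≠ 0, ∀ i, f i x = 0 := by
  obtain ⟨x, hx, hx0⟩ := (Submodule.ne_bot_iff _).mp <|
    (LinearMap.pi f).ker_ne_bot_of_finrank_lt (by simpa using h)
  exact ⟨x, hx0, fun i => congrFun (LinearMap.mem_ker.mp hx) i⟩

open ComplexConjugate RCLike in
theorem OrthonormalBasis.mul_norm_sq_le_re_inner_apply {𝕜 E ι : Type*} [RCLike 𝕜]
    [NormedAddCommGroup E] [InnerProductSpace 𝕜 E] [Fintype ι] (b : OrthonormalBasis ι 𝕜 E)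
    {T : E →ₗ[𝕜] E} {ev : ι → ℝ} (hT : ∀ j, T (b j) = (ev j : 𝕜) • b j) {c : ℝ} {x : E}
    (hx : ∀ j, b.repr x j ≠ 0 → c ≤ ev j) : c * ‖x‖ ^ 2 ≤ re (inner 𝕜 x (T x)) := by
  have hx_eq : x = ∑ j, b.repr x j • b j := (b.sum_repr x).symm
  have hinner : inner 𝕜 x (T x) = ∑ j, conj (b.repr x j) * ((ev j : 𝕜) * b.repr x j) := by
    conv_lhs => rw [hx_eq]
    simp only [map_sum, map_smul, hT, smul_smul, mul_comm]
    exact b.orthonormal.inner_sum _ _ _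
  rw [hinner, ← b.repr.norm_map x, EuclideanSpace.norm_sq_eq, mul_sum, map_sum]
  refine sum_le_sum fun j _ => ?_
  rw [mul_left_comm, RCLike.conj_mul]
  norm_cast
  rcases eq_or_ne (b.repr x j) 0 with h | h
  · simp [h]
  · exact mul_le_mul_of_nonneg_right (hx j h) (by positivity)

theorem Matrix.re_inner_toEuclideanLin_conjTranspose_mul_self {𝕜 m n : Type*} [RCLike 𝕜]
    [Fintype m] [DecidableEq m] [Fintype n] [DecidableEq n] (A : Matrix m n 𝕜)
    (x : EuclideanSpace 𝕜 n) :
    RCLike.re (inner 𝕜 x (toEuclideanLin (Aᴴ * A) x)) = ‖toEuclideanLin A x‖ ^ 2 := by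
  rw [toLpLin_mul_same, toEuclideanLin_conjTranspose_eq_adjoint, LinearMap.comp_apply,
    LinearMap.adjoint_inner_right, inner_self_eq_norm_sq]

theorem Matrix.norm_sq_toEuclideanLin_le {m n : Type*} [Fintype m] [Fintype n] [DecidableEq n]
    (A : Matrix m n ℝ) (s : Finset m) (x : EuclideanSpace ℝ n)
    (hx : ∀ l ∉ s, toEuclideanLin A x l = 0) :
    ‖toEuclideanLin A x‖ ^ 2 ≤ (∑ l ∈ s, ∑ j, A l j ^ 2) * ‖x‖ ^ 2 := by
  simp only [EuclideanSpace.norm_sq_eq, Real.norm_eq_abs, sq_abs]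
  rw [sum_mul, ← sum_subset (subset_univ s) fun l _ hl => by rw [hx l hl, sq, zero_mul]]
  refine sum_le_sum fun l _ => ?_
  simpa [toLpLin_apply, mulVec, dotProduct] using sum_mul_sq_le_sq_mul_sq univ (A l) x.ofLp

theorem eigenvalues_conjTranspose_mul_self_le_sum_sq {m : ℕ} (M : Matrix (Fin m) (Fin m) ℝ)
    {ev : Fin m → ℝ} (hanti : Antitone ev) (e : Equiv.Perm (Fin m))
    (hev : ∀ i, ev i = (isHermitian_conjTranspose_mul_self M).eigenvalues (e i)) (i : Fin m) :
    ev i ≤ ∑ l ∈ Ici i, ∑ j, M l j ^ 2 := by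
  set hA := isHermitian_conjTranspose_mul_self M
  set b := hA.eigenvectorBasis.reindex e.symm
  have hb : ∀ j, toEuclideanLin (Mᴴ * M) (b j) = (ev j : ℝ) • b j := fun j => by
    ext l
    simp only [b, OrthonormalBasis.reindex_apply, Equiv.symm_symm, toLpLin_apply,
      hA.mulVec_eigenvectorBasis, hev]
    rfl
  -- Test vectors: the span of the eigenvectors of the `i + 1` largest eigenvalues, cut by the
  -- `i` conditions `(M x)_l = 0` for `l < i`; that is `m - 1` linear conditions in total.
  let f : Ioi i ⊕ Iio i → EuclideanSpace ℝ (Fin m) →ₗ[ℝ] ℝ :=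
    Sum.elim (fun j => (EuclideanSpace.proj (j : Fin m)).toLinearMap ∘ₗ b.repr.toLinearMap)
      (fun l => (EuclideanSpace.proj (l : Fin m)).toLinearMap ∘ₗ toEuclideanLin M)
  obtain ⟨x, hx0, hx⟩ := exists_ne_zero_forall_eq_zero_of_card_lt f (by
    simp only [Fintype.card_sum, Fintype.card_coe, Fin.card_Ioi, Fin.card_Iio,
      finrank_euclideanSpace_fin]
    omega)
  have hlow : ev i * ‖x‖ ^ 2 ≤ ‖toEuclideanLin M x‖ ^ 2 := by
    rw [← M.re_inner_toEuclideanLin_conjTranspose_mul_self]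
    refine b.mul_norm_sq_le_re_inner_apply hb fun j hj => hanti (not_lt.mp fun hij => hj ?_)
    simpa [f] using hx (.inl ⟨j, mem_Ioi.mpr hij⟩)
  have hup := M.norm_sq_toEuclideanLin_le (Ici i) x fun l hl => by
    simpa [f] using hx (.inr ⟨l, by simpa using hl⟩)
  exact le_of_mul_le_mul_right (hlow.trans hup) (by positivity)

theorem antitone_sq_diag {m : ℕ} {M : Matrix (Fin m) (Fin m) ℝ}
    (hcol : ∀ i j : Fin m, i ≤ j → ∑ l ∈ Icc i j, M l j ^ 2 ≤ M i i ^ 2) :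
    Antitone fun i => M i i ^ 2 := fun i j hij =>
  (single_le_sum (f := fun l => M l j ^ 2) (fun _ _ => sq_nonneg _)
    (mem_Icc.mpr ⟨hij, le_rfl⟩)).trans (hcol i j hij)

theorem sum_Ici_sum_sq_le_mul_sq_diag {m : ℕ} {M : Matrix (Fin m) (Fin m) ℝ}
    (hupper : M.IsUpperTriangular)
    (hcol : ∀ i j : Fin m, i ≤ j → ∑ l ∈ Icc i j, M l j ^ 2 ≤ M i i ^ 2) (i : Fin m) :
    ∑ l ∈ Ici i, ∑ j, M l j ^ 2 ≤ m * M i i ^ 2 := by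
  have hcol' : ∀ j, ∑ l ∈ Ici i, M l j ^ 2 ≤ M i i ^ 2 := fun j => by
    rw [← sum_subset Icc_subset_Ici_self fun l hl hlj => ?_]
    · by_cases hij : i ≤ j
      · exact hcol i j hij
      · simp [Icc_eq_empty hij, sq_nonneg]
    · have hjl : j < l := lt_of_not_ge fun hlj' => hlj (mem_Icc.mpr ⟨mem_Ici.mp hl, hlj'⟩)
      simp [hupper hjl]
  calc ∑ l ∈ Ici i, ∑ j, M l j ^ 2 = ∑ j, ∑ l ∈ Ici i, M l j ^ 2 := sum_comm
    _ ≤ ∑ _j : Fin m, M i i ^ 2 := sum_le_sum fun j _ => hcol' j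
    _ = m * M i i ^ 2 := by simp

theorem prod_eigenvalues_conjTranspose_mul_self {n : Type*} [Fintype n] [DecidableEq n]
    (M : Matrix n n ℝ) : ∏ i, (isHermitian_conjTranspose_mul_self M).eigenvalues i = M.det ^ 2 := by
  have := (isHermitian_conjTranspose_mul_self M).det_eq_prod_eigenvalues
  simp only [RCLike.ofReal_real_eq_id, id_eq, det_mul, det_conjTranspose, star_trivial] at this
  rw [← this, sq]

theorem pow_card_le_mul_prod_of_prod_eq {ι : Type*} [Fintype ι] [DecidableEq ι] {s d : ι → ℝ}
    (F : Finset ι) {t C : ℝ} (ht : 0 < t) (htd : ∀ i, t ≤ d i) (hs : ∀ i, 0 ≤ s i)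
    (hsd : ∀ i ∉ F, s i ≤ C * d i) (hprod : ∏ i, s i = ∏ i, d i) :
    t ^ #F ≤ C ^ #Fᶜ * ∏ i ∈ F, s i := by
  have hd : 0 < ∏ i ∈ Fᶜ, d i := prod_pos fun i _ => ht.trans_le (htd i)
  refine le_of_mul_le_mul_right ?_ hd
  calc t ^ #F * ∏ i ∈ Fᶜ, d i = (∏ _i ∈ F, t) * ∏ i ∈ Fᶜ, d i := by rw [prod_const]
    _ ≤ (∏ i ∈ F, d i) * ∏ i ∈ Fᶜ, d i := by
      gcongr with i
      exact htd i
    _ = (∏ i ∈ F, s i) * ∏ i ∈ Fᶜ, s i := by rw [prod_mul_prod_compl, prod_mul_prod_compl, hprod]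
    _ ≤ (∏ i ∈ F, s i) * ∏ i ∈ Fᶜ, C * d i :=
      mul_le_mul_of_nonneg_left (prod_le_prod (fun i _ => hs i) fun i hi => hsd i (mem_compl.mp hi))
        (prod_nonneg fun i _ => hs i)
    _ = C ^ #Fᶜ * (∏ i ∈ F, s i) * ∏ i ∈ Fᶜ, d i := by rw [prod_mul_distrib, prod_const]; ring

theorem le_rpow_inv_mul_sum_div_card {ι : Type*} {s : ι → ℝ} {F : Finset ι} (hF : F.Nonempty)
    (hs : ∀ i ∈ F, 0 ≤ s i) {t a : ℝ} (ht : 0 ≤ t) (ha : 0 ≤ a)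
    (h : t ^ #F ≤ a * ∏ i ∈ F, s i) : t ≤ a ^ (#F : ℝ)⁻¹ * ((∑ i ∈ F, s i) / #F) := by
  have amgm : (∏ i ∈ F, s i) ^ (#F : ℝ)⁻¹ ≤ (∑ i ∈ F, s i) / #F := by
    simpa using Real.geom_mean_le_arith_mean F (fun _ => 1) s (by simp) (by simpa using hF) hs
  calc t = (t ^ #F) ^ (#F : ℝ)⁻¹ := (Real.pow_rpow_inv_natCast ht hF.card_ne_zero).symm
    _ ≤ (a * ∏ i ∈ F, s i) ^ (#F : ℝ)⁻¹ := by gcongr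
    _ = a ^ (#F : ℝ)⁻¹ * (∏ i ∈ F, s i) ^ (#F : ℝ)⁻¹ := Real.mul_rpow ha (prod_nonneg hs)
    _ ≤ a ^ (#F : ℝ)⁻¹ * ((∑ i ∈ F, s i) / #F) := by gcongr

theorem pow_rpow_inv_div_le {m k p n : ℕ} (hp : p ≤ k) (hpn : p + n = m) (hkm : 2 * k < m) :
    ((m : ℝ) ^ p) ^ (n : ℝ)⁻¹ / n ≤ 2 * (m : ℝ) ^ (2 * (k : ℝ) / m) * (1 / m) := by
  have hm : (1 : ℝ) ≤ m := by exact_mod_cast (by omega : 1 ≤ m)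
  have hn : (0 : ℝ) < n := by exact_mod_cast (by omega : 0 < n)
  have hmn : (m : ℝ) ≤ 2 * n := by exact_mod_cast (by omega : m ≤ 2 * n)
  have hexp : (p : ℝ) / n ≤ 2 * k / m := by
    rw [div_le_div_iff₀ hn (by positivity)]
    have : p * m ≤ 2 * k * n := by nlinarith
    exact_mod_cast this
  rw [← Real.rpow_natCast, ← Real.rpow_mul (by positivity), ← div_eq_mul_inv, div_eq_mul_one_div,
    mul_comm 2, mul_assoc]
  gcongr
  rw [div_le_iff₀ hn]
  field_simp
  exact hmn

-- `σ` is 0-indexed, so the paper's `Σ_{i=k}^{m}` is the sum over positions `i ≥ k - 1`.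
theorem upper_triangular_last_diagonal_entry_bound
    (m : ℕ) (M : Matrix (Fin m) (Fin m) ℝ)
    (hupper : ∀ l j : Fin m, j < l → M l j = 0)
    (hcol : ∀ i j : Fin m, i ≤ j → (∑ l ∈ Finset.Icc i j, (M l j) ^ 2) ≤ (M i i) ^ 2)
    (σ : Fin m → ℝ) (hσ0 : ∀ i, 0 ≤ σ i) (hσanti : Antitone σ)
    (e : Equiv.Perm (Fin m))
    (hσ : ∀ i, (σ i) ^ 2 = (Matrix.isHermitian_conjTranspose_mul_self M).eigenvalues (e i))
    (k : ℕ) (hkm : 2 * k < m) :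
    (M ⟨m - 1, by omega⟩ ⟨m - 1, by omega⟩) ^ 2 ≤
      2 * (m:ℝ) ^ ((2 * (k:ℝ)) / (m:ℝ)) * ((1:ℝ) / m) *
        ∑ i ∈ Finset.univ.filter (fun i : Fin m => k - 1 ≤ (i:ℕ)), (σ i) ^ 2 := by
  set F := univ.filter fun i : Fin m => k - 1 ≤ (i : ℕ)
  have hF : #F = m - (k - 1) := by
    rw [show F = Ici ⟨k - 1, by omega⟩ by ext; simp [F, Fin.le_def], Fin.card_Ici]
  have hFc : #Fᶜ = k - 1 := by rw [card_compl, hF, Fintype.card_fin]; omega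
  obtain ht | ht := (sq_nonneg (M ⟨m - 1, by omega⟩ ⟨m - 1, by omega⟩)).eq_or_lt
  · rw [← ht]
    positivity
  have hσsq : Antitone fun i => σ i ^ 2 := fun i j hij => pow_le_pow_left₀ (hσ0 j) (hσanti hij) 2
  have hprod : ∏ i, σ i ^ 2 = ∏ i, M i i ^ 2 := by
    rw [prod_congr rfl fun i _ => hσ i, Equiv.prod_comp e, prod_eigenvalues_conjTranspose_mul_self,
      det_of_isUpperTriangular fun l j h => hupper l j h, prod_pow]
  have hpow := pow_card_le_mul_prod_of_prod_eq F ht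
    (fun i => antitone_sq_diag hcol (Nat.le_sub_one_of_lt i.is_lt))
    (fun i => sq_nonneg (σ i)) (fun i _ => (eigenvalues_conjTranspose_mul_self_le_sum_sq M hσsq e
      hσ i).trans (sum_Ici_sum_sq_le_mul_sq_diag (fun l j h => hupper l j h) hcol i)) hprod
  have hroot := le_rpow_inv_mul_sum_div_card (card_pos.mp (by omega)) (fun i _ => sq_nonneg (σ i))
    ht.le (by positivity) hpow
  rw [hF, hFc] at hroot
  refine hroot.trans ?_
  rw [mul_div_left_comm, mul_comm]
  exact mul_le_mul_of_nonneg_right (pow_rpow_inv_div_le (by omega) (by omega) hkm)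
    (sum_nonneg fun i _ => sq_nonneg (σ i))
end

section
/- Let M ∈ ℝ^{m×m} be an upper triangular matrix (M_{ℓ,j} = 0 for ℓ > j) satisfying Σ_{ℓ=i}^{j} M_{ℓ,j}² ≤ M_{i,i}² for all 1 ≤ i ≤ j ≤ m. Then for every 1 ≤ i ≤ m one has σ_i(M)² ≤ (m−i+1)·M_{i,i}². -/
/-!
This is half of the Courant–Fischer argument. Let `u₀, …, uᵢ` be orthonormal eigenvectors of
`MᵀM` for `σ₀², …, σᵢ²`, all positive unless `σᵢ = 0`. The left singular vectors
`wⱼ = σⱼ⁻¹ M uⱼ` are orthonormal, `Mᵀ wⱼ = σⱼ uⱼ`, so `‖Mᵀ x‖² ≥ σᵢ² ‖x‖²` on their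
`(i+1)`-dimensional span. That span meets the `(m-i)`-dimensional space of vectors vanishing
on the coordinates `l < i` in some `x ≠ 0`. For such `x`, upper triangularity gives
`(Mᵀ x)ⱼ = ∑_{l ∈ [i, j]} M_{lj} x_l`, which vanishes for `j < i`; for `j ≥ i`, Cauchy–Schwarz and
the column hypothesis bound its square by `M_{ii}² ‖x‖²`. Summing over the `m - i` indices `j ≥ i`
gives `‖Mᵀ x‖² ≤ (m - i) M_{ii}² ‖x‖²`.
-/

open Matrix Finset

section SingularVectors

variable {ι E F : Type*} [NormedAddCommGroup E] [InnerProductSpace ℝ E]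
  [NormedAddCommGroup F] [InnerProductSpace ℝ F]

theorem Orthonormal.mul_norm_sq_le_norm_sq_apply_of_mem_span [Fintype ι] {w : ι → E} {u : ι → F}
    (hw : Orthonormal ℝ w) (hu : Orthonormal ℝ u) (S : E →ₗ[ℝ] F) {s : ι → ℝ}
    (hS : ∀ j, S (w j) = s j • u j) {c : ℝ} (hc : ∀ j, c ≤ s j ^ 2) {x : E}
    (hx : x ∈ Submodule.span ℝ (Set.range w)) : c * ‖x‖ ^ 2 ≤ ‖S x‖ ^ 2 := by
  obtain ⟨a, rfl⟩ := (Submodule.mem_span_range_iff_exists_fun ℝ).mp hx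
  have hSx : S (∑ j, a j • w j) = ∑ j, (a j * s j) • u j := by
    simp only [map_sum, map_smul, hS, smul_smul]
  rw [hSx, ← real_inner_self_eq_norm_sq, ← real_inner_self_eq_norm_sq, hw.inner_sum,
    hu.inner_sum, mul_sum]
  refine sum_le_sum fun j _ => ?_
  simp only [conj_trivial]
  nlinarith [hc j, mul_self_nonneg (a j)]

variable [FiniteDimensional ℝ E] [FiniteDimensional ℝ F] {T : E →ₗ[ℝ] F} {u : ι → E} {s : ι → ℝ}

theorem Orthonormal.inv_smul_apply_of_adjoint_apply (hu : Orthonormal ℝ u) (hs : ∀ j, s j ≠ 0)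
    (hT : ∀ j, T.adjoint (T (u j)) = s j ^ 2 • u j) :
    Orthonormal ℝ fun j => (s j)⁻¹ • T (u j) := by
  classical
  rw [orthonormal_iff_ite] at hu ⊢
  intro a b
  rw [real_inner_smul_left, real_inner_smul_right, ← LinearMap.adjoint_inner_right, hT,
    real_inner_smul_right, hu]
  split_ifs with hab
  · subst hab
    field_simp [hs a]
  · simp

theorem LinearMap.adjoint_inv_smul_apply_eq_smul {j : ι} (hs : s j ≠ 0)
    (hT : T.adjoint (T (u j)) = s j ^ 2 • u j) :
    T.adjoint ((s j)⁻¹ • T (u j)) = s j • u j := by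
  rw [map_smul, hT, smul_smul]
  congr 1
  field_simp

theorem Orthonormal.mul_norm_sq_le_norm_sq_adjoint_apply_of_mem_span [Fintype ι]
    (hu : Orthonormal ℝ u) (hs : ∀ j, s j ≠ 0) (hT : ∀ j, T.adjoint (T (u j)) = s j ^ 2 • u j)
    {c : ℝ} (hc : ∀ j, c ≤ s j ^ 2) {x : F}
    (hx : x ∈ Submodule.span ℝ (Set.range fun j => (s j)⁻¹ • T (u j))) :
    c * ‖x‖ ^ 2 ≤ ‖T.adjoint x‖ ^ 2 :=
  (hu.inv_smul_apply_of_adjoint_apply hs hT).mul_norm_sq_le_norm_sq_apply_of_mem_span hu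
    T.adjoint (fun j => LinearMap.adjoint_inv_smul_apply_eq_smul (hs j) (hT j)) hc hx

end SingularVectors

theorem EuclideanSpace.exists_ne_zero_mem_forall_mem_apply_eq_zero {𝕜 n : Type*} [RCLike 𝕜]
    [Fintype n] (W : Submodule 𝕜 (EuclideanSpace 𝕜 n)) (s : Finset n)
    (h : #s < Module.finrank 𝕜 W) : ∃ x ∈ W, x ≠ 0 ∧ ∀ l ∈ s, x l = 0 := by
  let f : W →ₗ[𝕜] (s → 𝕜) := LinearMap.pi fun l => EuclideanSpace.projₗ (l : n) ∘ₗ W.subtype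
  obtain ⟨⟨x, hxW⟩, hfx, hx0⟩ :=
    Submodule.exists_mem_ne_zero_of_ne_bot (f.ker_ne_bot_of_finrank_lt (by simpa using h))
  refine ⟨x, hxW, by simpa using hx0, fun l hl => ?_⟩
  simpa [f] using congrFun (LinearMap.mem_ker.mp hfx) ⟨l, hl⟩

theorem Matrix.adjoint_toEuclideanLin_apply_eigenvectorBasis {𝕜 m n : Type*} [RCLike 𝕜]
    [Fintype m] [Fintype n] [DecidableEq m] [DecidableEq n] (M : Matrix m n 𝕜) (j : n) :
    (toEuclideanLin M).adjoint
        (toEuclideanLin M ((isHermitian_conjTranspose_mul_self M).eigenvectorBasis j)) =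
      (isHermitian_conjTranspose_mul_self M).eigenvalues j •
        (isHermitian_conjTranspose_mul_self M).eigenvectorBasis j := by
  rw [← toEuclideanLin_conjTranspose_eq_adjoint]
  ext l
  simpa only [toLpLin_apply, mulVec_mulVec, WithLp.ofLp_smul] using
    congrFun ((isHermitian_conjTranspose_mul_self M).mulVec_eigenvectorBasis j) l

section UpperTriangular

variable {n : Type*} [Fintype n] [LinearOrder n] {M : Matrix n n ℝ} {i : n} {x : n → ℝ}

theorem vecMul_apply_eq_zero_of_lt (hM : ∀ l j, j < l → M l j = 0) (hx : ∀ l < i, x l = 0)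
    {j : n} (hji : j < i) : (x ᵥ* M) j = 0 := by
  refine sum_eq_zero fun l _ => ?_
  rcases lt_or_ge l i with hl | hl
  · simp [hx l hl]
  · simp [hM l j (hji.trans_le hl)]

variable [LocallyFiniteOrder n]

theorem sq_vecMul_apply_le (hM : ∀ l j, j < l → M l j = 0) (hx : ∀ l < i, x l = 0) {j : n}
    (hcol : ∑ l ∈ Icc i j, M l j ^ 2 ≤ M i i ^ 2) :
    (x ᵥ* M) j ^ 2 ≤ M i i ^ 2 * ∑ l, x l ^ 2 := by
  have hsupp : (x ᵥ* M) j = ∑ l ∈ Icc i j, x l * M l j := by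
    refine (sum_subset (subset_univ _) fun l _ hl => ?_).symm
    rcases lt_or_ge l i with hli | hil
    · simp [hx l hli]
    · simp [hM l j (lt_of_not_ge fun hlj => hl (mem_Icc.mpr ⟨hil, hlj⟩))]
  calc (x ᵥ* M) j ^ 2 ≤ (∑ l ∈ Icc i j, x l ^ 2) * ∑ l ∈ Icc i j, M l j ^ 2 :=
        hsupp ▸ sum_mul_sq_le_sq_mul_sq _ _ _
    _ ≤ (∑ l, x l ^ 2) * M i i ^ 2 :=
        mul_le_mul (sum_le_sum_of_subset_of_nonneg (subset_univ _) fun l _ _ => sq_nonneg _)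
          hcol (sum_nonneg fun l _ => sq_nonneg _) (sum_nonneg fun l _ => sq_nonneg _)
    _ = M i i ^ 2 * ∑ l, x l ^ 2 := mul_comm _ _

theorem sum_sq_vecMul_apply_le (hM : ∀ l j, j < l → M l j = 0) (hx : ∀ l < i, x l = 0)
    (hcol : ∀ j, i ≤ j → ∑ l ∈ Icc i j, M l j ^ 2 ≤ M i i ^ 2) :
    ∑ j, (x ᵥ* M) j ^ 2 ≤ #{j | i ≤ j} * M i i ^ 2 * ∑ l, x l ^ 2 := by
  calc ∑ j, (x ᵥ* M) j ^ 2 = ∑ j with i ≤ j, (x ᵥ* M) j ^ 2 := by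
        refine (sum_filter_of_ne fun j _ hj => ?_).symm
        by_contra hij
        exact hj (by rw [vecMul_apply_eq_zero_of_lt hM hx (lt_of_not_ge hij)]; simp)
    _ ≤ ∑ j with i ≤ j, M i i ^ 2 * ∑ l, x l ^ 2 :=
        sum_le_sum fun j hj => sq_vecMul_apply_le hM hx (hcol j (mem_filter.mp hj).2)
    _ = #{j | i ≤ j} * M i i ^ 2 * ∑ l, x l ^ 2 := by
        rw [sum_const, nsmul_eq_mul, mul_assoc]

theorem norm_sq_adjoint_toEuclideanLin_le [DecidableEq n] (hM : ∀ l j, j < l → M l j = 0)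
    (hcol : ∀ j, i ≤ j → ∑ l ∈ Icc i j, M l j ^ 2 ≤ M i i ^ 2) {x : EuclideanSpace ℝ n}
    (hx : ∀ l < i, x l = 0) :
    ‖(toEuclideanLin M).adjoint x‖ ^ 2 ≤ #{j | i ≤ j} * M i i ^ 2 * ‖x‖ ^ 2 := by
  rw [← toEuclideanLin_conjTranspose_eq_adjoint]
  simpa [EuclideanSpace.real_norm_sq_eq, conjTranspose_eq_transpose_of_trivial, mulVec_transpose]
    using sum_sq_vecMul_apply_le hM hx hcol

end UpperTriangular

-- `i` is 0-indexed, so the paper's factor `m - i + 1` reads `m - i`.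
theorem upper_triangular_singular_value_upper_bound
    (m : ℕ) (M : Matrix (Fin m) (Fin m) ℝ)
    (hupper : ∀ l j : Fin m, j < l → M l j = 0)
    (hcol : ∀ i j : Fin m, i ≤ j → (∑ l ∈ Finset.Icc i j, (M l j) ^ 2) ≤ (M i i) ^ 2)
    (σ : Fin m → ℝ) (hσ0 : ∀ i, 0 ≤ σ i) (hσanti : Antitone σ)
    (e : Equiv.Perm (Fin m))
    (hσ : ∀ i, (σ i) ^ 2 = (Matrix.isHermitian_conjTranspose_mul_self M).eigenvalues (e i)) :
    ∀ i : Fin m, (σ i) ^ 2 ≤ ((m : ℝ) - (i : ℕ)) * (M i i) ^ 2 := by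
  intro i
  rcases (hσ0 i).eq_or_lt with hσi | hσi
  · rw [← hσi, sq, zero_mul]
    exact mul_nonneg (sub_nonneg.mpr (by exact_mod_cast i.is_le')) (sq_nonneg _)
  let hA := isHermitian_conjTranspose_mul_self M
  let T := toEuclideanLin M
  let u : Set.Iic i → EuclideanSpace ℝ (Fin m) := fun j => hA.eigenvectorBasis (e j)
  have hu : Orthonormal ℝ u :=
    hA.eigenvectorBasis.orthonormal.comp _ (e.injective.comp Subtype.val_injective)
  have hσj : ∀ j : Set.Iic i, σ j ≠ 0 := fun j => (hσi.trans_le (hσanti j.2)).ne'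
  have hTu : ∀ j : Set.Iic i, T.adjoint (T (u j)) = σ j ^ 2 • u j := fun j => by
    rw [hσ]; exact adjoint_toEuclideanLin_apply_eigenvectorBasis M (e j)
  have hw := hu.inv_smul_apply_of_adjoint_apply hσj hTu
  obtain ⟨x, hxW, hx0, hxi⟩ := EuclideanSpace.exists_ne_zero_mem_forall_mem_apply_eq_zero
    (Submodule.span ℝ (Set.range fun j : Set.Iic i => (σ j)⁻¹ • T (u j))) (Iio i)
    (by simp [finrank_span_eq_card hw.linearIndependent])
  have hsingular : σ i ^ 2 * ‖x‖ ^ 2 ≤ ‖T.adjoint x‖ ^ 2 :=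
    hu.mul_norm_sq_le_norm_sq_adjoint_apply_of_mem_span hσj hTu
      (fun j => pow_le_pow_left₀ hσi.le (hσanti j.2) 2) hxW
  have hcolumn : ‖T.adjoint x‖ ^ 2 ≤ ((m : ℝ) - (i : ℕ)) * M i i ^ 2 * ‖x‖ ^ 2 := by
    simpa [filter_le_eq_Ici, Nat.cast_sub i.is_le'] using
      norm_sq_adjoint_toEuclideanLin_le hupper (hcol i) fun l hl => hxi l (mem_Iio.mpr hl)
  exact le_of_mul_le_mul_right (hsingular.trans hcolumn) (pow_pos (norm_pos_iff.mpr hx0) 2)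
end

section
/- Let 1 ≤ k ≤ d be integers, let α > 0, and let f be a vector k-monotone function from the positive semidefinite d×d real matrices to the nonnegative reals. Let V ⊆ ℝ^d be finite and let U ⊆ V be an α-spectral k-spanner of V. Then for every weight function s : V → [0,∞) there exists a weight function t : U → [0,∞) with Σ_{u∈U} t(u) = Σ_{v∈V} s(v) such that f( α · Σ_{u∈U} t(u) u uᵀ ) ≤ f( Σ_{v∈V} s(v) v vᵀ ). -/
open Matrix Finset

noncomputable section

/-- `U` is an `α`-spectral `k`-spanner of `V`. -/
def IsSpectralKSpanner {d : ℕ} (k : ℕ) (α : ℝ) (V U : Finset (Fin d → ℝ)) : Prop :=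
  U ⊆ V ∧ ∀ v ∈ V, ∃ μ : (Fin d → ℝ) → ℝ,
    (∀ u, 0 ≤ μ u) ∧ (∑ u ∈ U, μ u) = 1 ∧
    PrecK k (outer v) (α • ∑ u ∈ U, μ u • outer u)

/-- `f` is vector `k`-monotone: for PSD `A`, `B` and `v` with `v vᵀ ⪯_k B`,
`f(A + v vᵀ) ≥ f(A + B)`. -/
def VectorKMonotone {d : ℕ} (k : ℕ) (f : Matrix (Fin d) (Fin d) ℝ → ℝ) : Prop :=
  ∀ A B : Matrix (Fin d) (Fin d) ℝ, A.PosSemidef → B.PosSemidef →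
    ∀ v : Fin d → ℝ, PrecK k (outer v) B → f (A + B) ≤ f (A + outer v)

/-!
Each `v ∈ V` is dominated, in the order `⪯_k`, by the mixture `α • ∑ u, μ_v(u) u uᵀ` the spanner
provides. Scaling by `s v` preserves this (`s v • v vᵀ` is the outer product of `√(s v) • v`), so
vector `k`-monotonicity lets us replace the terms `s v • v vᵀ` by these mixtures one vector at a
time without increasing `f`. Collecting the mixtures gives `t u = ∑ v, s v μ_v(u)`, whose total
mass is `∑ v, s v` because each `μ_v` is a probability distribution.
-/

section

variable {d : ℕ}

lemma outer_posSemidef (v : Fin d → ℝ) : (outer v).PosSemidef := by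
  simpa [outer] using posSemidef_vecMulVec_self_star v

lemma outer_smul (c : ℝ) (v : Fin d → ℝ) : outer (c • v) = (c * c) • outer v := by
  simp only [outer, smul_vecMulVec, vecMulVec_smul, smul_smul]

lemma frob_smul_left (c : ℝ) (A B : Matrix (Fin d) (Fin d) ℝ) :
    frob (c • A) B = c * frob A B := by
  simp only [frob, Matrix.smul_apply, smul_eq_mul, Finset.mul_sum, mul_assoc]

lemma PrecK.smul {k : ℕ} {A B : Matrix (Fin d) (Fin d) ℝ} (h : PrecK k A B) {c : ℝ}
    (hc : 0 ≤ c) : PrecK k (c • A) (c • B) := fun P hP hPP hrank => by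
  simp only [frob_smul_left]
  exact mul_le_mul_of_nonneg_left (h P hP hPP hrank) hc

namespace VectorKMonotone

variable {k : ℕ} {f : Matrix (Fin d) (Fin d) ℝ → ℝ}

lemma apply_add_smul_le (hf : VectorKMonotone k f) {A B : Matrix (Fin d) (Fin d) ℝ}
    (hA : A.PosSemidef) (hB : B.PosSemidef) {v : Fin d → ℝ} (hvB : PrecK k (outer v) B)
    {c : ℝ} (hc : 0 ≤ c) : f (A + c • B) ≤ f (A + c • outer v) := by
  have hc_outer : c • outer v = outer (Real.sqrt c • v) := by
    rw [outer_smul, Real.mul_self_sqrt hc]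
  have hprec : PrecK k (outer (Real.sqrt c • v)) (c • B) := hc_outer ▸ hvB.smul hc
  rw [hc_outer]
  exact hf A (c • B) hA (hB.smul hc) _ hprec

lemma apply_add_sum_le (hf : VectorKMonotone k f) {ι : Type*} (W : Finset ι)
    (v : ι → Fin d → ℝ) (B : ι → Matrix (Fin d) (Fin d) ℝ) (s : ι → ℝ)
    (hB : ∀ i ∈ W, (B i).PosSemidef) (hvB : ∀ i ∈ W, PrecK k (outer (v i)) (B i))
    (hs : ∀ i ∈ W, 0 ≤ s i) {A : Matrix (Fin d) (Fin d) ℝ} (hA : A.PosSemidef) :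
    f (A + ∑ i ∈ W, s i • B i) ≤ f (A + ∑ i ∈ W, s i • outer (v i)) := by
  classical
  induction W using Finset.induction generalizing A with
  | empty => simp
  | @insert i W hi ih =>
    simp only [Finset.forall_mem_insert] at hB hvB hs
    have hrest : (∑ j ∈ W, s j • B j).PosSemidef :=
      posSemidef_sum W fun j hj => (hB.2 j hj).smul (hs.2 j hj)
    rw [sum_insert hi, sum_insert hi]
    calc f (A + (s i • B i + ∑ j ∈ W, s j • B j))
        = f ((A + ∑ j ∈ W, s j • B j) + s i • B i) := by abel_nf
      _ ≤ f ((A + ∑ j ∈ W, s j • B j) + s i • outer (v i)) :=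
        hf.apply_add_smul_le (hA.add hrest) hB.1 hvB.1 hs.1
      _ = f ((A + s i • outer (v i)) + ∑ j ∈ W, s j • B j) := by abel_nf
      _ ≤ f ((A + s i • outer (v i)) + ∑ j ∈ W, s j • outer (v j)) :=
        ih hB.2 hvB.2 hs.2 (hA.add ((outer_posSemidef _).smul hs.1))
      _ = f (A + (s i • outer (v i) + ∑ j ∈ W, s j • outer (v j))) := by abel_nf

end VectorKMonotone

end

theorem spanner_coreset_for_fractional_budgeted_minimization_general
    {d : ℕ} (k : ℕ) (α : ℝ) (hα : 0 < α)
    (f : Matrix (Fin d) (Fin d) ℝ → ℝ)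
    (hfmono : VectorKMonotone k f)
    (V U : Finset (Fin d → ℝ)) (hUV : IsSpectralKSpanner k α V U)
    (s : (Fin d → ℝ) → ℝ) (hs : ∀ v, 0 ≤ s v) :
    ∃ t : (Fin d → ℝ) → ℝ, (∀ u, 0 ≤ t u) ∧
      (∑ u ∈ U, t u) = (∑ v ∈ V, s v) ∧
      f (α • ∑ u ∈ U, t u • outer u) ≤ f (∑ v ∈ V, s v • outer v) := by
  choose! μ hμ_nonneg hμ_sum hμ_prec using hUV.2
  refine ⟨fun u => ∑ v ∈ V, s v * μ v u,
    fun u => sum_nonneg fun v hv => mul_nonneg (hs v) (hμ_nonneg v hv u), ?_, ?_⟩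
  · rw [sum_comm]
    exact sum_congr rfl fun v hv => by rw [← mul_sum, hμ_sum v hv, mul_one]
  · have hmixture : α • ∑ u ∈ U, (∑ v ∈ V, s v * μ v u) • outer u =
        ∑ v ∈ V, s v • (α • ∑ u ∈ U, μ v u • outer u) := by
      simp only [smul_sum, sum_smul, smul_smul, mul_left_comm]
      exact sum_comm
    have hmixture_psd (v : Fin d → ℝ) (hv : v ∈ V) :
        (α • ∑ u ∈ U, μ v u • outer u).PosSemidef :=
      (posSemidef_sum U fun u _ => (outer_posSemidef u).smul (hμ_nonneg v hv u)).smul hα.le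
    simpa only [hmixture, zero_add, id] using hfmono.apply_add_sum_le V id _ s hmixture_psd hμ_prec
      (fun v _ => hs v) PosSemidef.zero

theorem spanner_coreset_for_fractional_budgeted_minimization
    {d : ℕ} (k : ℕ) (hk1 : 1 ≤ k) (hkd : k ≤ d) (α : ℝ) (hα : 0 < α)
    (f : Matrix (Fin d) (Fin d) ℝ → ℝ)
    (hf0 : ∀ A : Matrix (Fin d) (Fin d) ℝ, A.PosSemidef → 0 ≤ f A)
    (hfmono : VectorKMonotone k f)
    (V U : Finset (Fin d → ℝ)) (hUV : IsSpectralKSpanner k α V U)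
    (s : (Fin d → ℝ) → ℝ) (hs : ∀ v, 0 ≤ s v) :
    ∃ t : (Fin d → ℝ) → ℝ, (∀ u, 0 ≤ t u) ∧
      (∑ u ∈ U, t u) = (∑ v ∈ V, s v) ∧
      f (α • ∑ u ∈ U, t u • outer u) ≤ f (∑ v ∈ V, s v • outer v) :=
  spanner_coreset_for_fractional_budgeted_minimization_general k α hα f hfmono V U hUV s hs
end
end

section
/- For any vectors v_1, …, v_n ∈ ℝ^d and any integer 1 ≤ k ≤ d, det_k( Σ_{i=1}^{n} v_i v_iᵀ ) = Σ_{S ⊆ {1,…,n}, |S| = k} det_k( Σ_{i∈S} v_i v_iᵀ ). -/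
/-!
STATEMENT 15: For any vectors v_1, …, v_n ∈ ℝ^d and any integer 1 ≤ k ≤ d,
det_k( Σ_{i=1}^{n} v_i v_iᵀ ) = Σ_{S ⊆ {1,…,n}, |S| = k} det_k( Σ_{i∈S} v_i v_iᵀ ).
-/

open Matrix Finset

noncomputable section

/-- `detk k A` is the sum of all `k × k` principal minors of `A`. -/
def detk {d : ℕ} (k : ℕ) (A : Matrix (Fin d) (Fin d) ℝ) : ℝ :=
  ∑ S ∈ Finset.powersetCard k (Finset.univ : Finset (Fin d)),
    Matrix.det (A.submatrix (fun i : {x // x ∈ S} => (i : Fin d))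
      (fun j : {x // x ∈ S} => (j : Fin d)))

/-
Expanding a principal `k × k` minor of `∑ i, v i (v i)ᵀ` row by row (the determinant is
multilinear in the rows) writes it as a sum over maps `r` from the `k` rows to indices `i`; maps
that are not injective repeat a row and contribute nothing. Grouping the injective maps by their
image `T`, a `k`-subset of indices, gives exactly the same minor of `∑ i ∈ T, v i (v i)ᵀ`.
Summing over the principal minors and exchanging the two sums proves the theorem.
-/

open Function

section

variable {ι α : Type*} [Fintype ι] [DecidableEq α]

theorem image_univ_eq_of_injective_of_card_eq {r : ι → α} (hr : Injective r) {T : Finset α}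
    (hrT : ∀ i, r i ∈ T) (hT : T.card = Fintype.card ι) : univ.image r = T :=
  eq_of_subset_of_card_le (by simpa [subset_iff] using hrT)
    (by rw [card_image_of_injective _ hr, hT, card_univ])

theorem sum_piFinset_eq_sum_powersetCard_sum_piFinset [DecidableEq ι] {β : Type*}
    [AddCommMonoid β] (A : Finset α) (f : (ι → α) → β) (hf : ∀ r, f r ≠ 0 → Injective r) :
    ∑ r ∈ Fintype.piFinset fun _ : ι => A, f r =
      ∑ T ∈ A.powersetCard (Fintype.card ι), ∑ r ∈ Fintype.piFinset fun _ : ι => T, f r := by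
  have hfiber : ∀ T ∈ A.powersetCard (Fintype.card ι),
      ∑ r ∈ Fintype.piFinset (fun _ : ι => A) with univ.image r = T, f r =
        ∑ r ∈ Fintype.piFinset fun _ : ι => T, f r := by
    intro T hT
    obtain ⟨hTA, hTcard⟩ := mem_powersetCard.mp hT
    refine sum_subset (fun r hr => ?_) (fun r hrT hr => ?_)
    · obtain ⟨-, rfl⟩ := mem_filter.mp hr
      simp
    · by_contra hne
      rw [Fintype.mem_piFinset] at hrT
      exact hr (mem_filter.mpr ⟨Fintype.mem_piFinset.mpr fun i => hTA (hrT i),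
        image_univ_eq_of_injective_of_card_eq (hf r hne) hrT hTcard⟩)
  rw [← sum_congr rfl hfiber, sum_fiberwise_eq_sum_filter]
  refine (sum_filter_of_ne fun r hr hne => ?_).symm
  rw [Fintype.mem_piFinset] at hr
  rw [mem_powersetCard, card_image_of_injective _ (hf r hne), card_univ]
  simpa [subset_iff] using hr

end

section

variable {ι α R : Type*} [Fintype ι] [DecidableEq ι] [CommRing R]

theorem det_sum_vecMulVec_eq_sum_piFinset (A : Finset α) (u w : α → ι → R) :
    det (∑ a ∈ A, vecMulVec (u a) (w a)) =
      ∑ r ∈ Fintype.piFinset fun _ : ι => A, (∏ i, u (r i) i) * det (of fun i j => w (r i) j) := by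
  have hrows : ∑ a ∈ A, vecMulVec (u a) (w a) = of fun i => ∑ a ∈ A, u a i • w a := by
    ext i j
    simp [vecMulVec_apply, Matrix.sum_apply]
  rw [hrows]
  exact (detRowAlternating.toMultilinearMap.map_sum_finset _ _).trans <|
    sum_congr rfl fun r _ => detRowAlternating.map_smul_univ (fun i => u (r i) i) fun i => w (r i)

theorem det_of_comp_eq_zero_of_not_injective (w : α → ι → R) {r : ι → α} (hr : ¬ Injective r) :
    det (of fun i j => w (r i) j) = 0 := by
  obtain ⟨i, j, hij, hne⟩ := not_injective_iff.mp hr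
  exact det_zero_of_row_eq hne (by ext; simp [hij])

theorem det_sum_vecMulVec_eq_sum_powersetCard [DecidableEq α] (A : Finset α) (u w : α → ι → R) :
    det (∑ a ∈ A, vecMulVec (u a) (w a)) =
      ∑ T ∈ A.powersetCard (Fintype.card ι), det (∑ a ∈ T, vecMulVec (u a) (w a)) := by
  simp only [det_sum_vecMulVec_eq_sum_piFinset]
  refine sum_piFinset_eq_sum_powersetCard_sum_piFinset A _ fun r hne => ?_
  by_contra hr
  exact hne (by rw [det_of_comp_eq_zero_of_not_injective w hr, mul_zero])

end

theorem submatrix_sum_outer {d n : ℕ} {ι : Type*} (v : Fin n → Fin d → ℝ) (B : Finset (Fin n))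
    (e : ι → Fin d) :
    (∑ i ∈ B, outer (v i)).submatrix e e = ∑ i ∈ B, vecMulVec (v i ∘ e) (v i ∘ e) := by
  ext
  simp [outer, vecMulVec_apply, Matrix.sum_apply]

theorem detk_sum_outer_eq_sum_detk_subsets_general
    {d : ℕ} (n k : ℕ) (v : Fin n → (Fin d → ℝ)) :
    detk k (∑ i, outer (v i)) =
      ∑ S ∈ Finset.powersetCard k (Finset.univ : Finset (Fin n)),
        detk k (∑ i ∈ S, outer (v i)) := by
  unfold detk
  rw [sum_comm]
  refine sum_congr rfl fun S hS => ?_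
  have hcard : Fintype.card S = k := by simpa using (mem_powersetCard.mp hS).2
  simp only [submatrix_sum_outer]
  rw [det_sum_vecMulVec_eq_sum_powersetCard, hcard]

theorem detk_sum_outer_eq_sum_detk_subsets
    {d : ℕ} (n k : ℕ) (hk1 : 1 ≤ k) (hkd : k ≤ d) (v : Fin n → (Fin d → ℝ)) :
    detk k (∑ i, outer (v i)) =
      ∑ S ∈ Finset.powersetCard k (Finset.univ : Finset (Fin n)),
        detk k (∑ i ∈ S, outer (v i)) :=
  detk_sum_outer_eq_sum_detk_subsets_general n k v
end
end
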